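/- arXiv:math/0605212 — 8 statements merged into one kernel-verified Lean document; each statement's English description precedes it below -/
import Mathlib

section
/- For every real number q and every integer k ≥ 1, the (k+1)×(k+1) determinant det((q^{i·j})_{i,j=0}^{k}) equals (∏_{l=1}^{k} q^{l(l-1)/2}) · (∏_{j=1}^{k} (q^{j} − 1)^{k+1−j}). -/
/-!
The matrix is the Vandermonde matrix of `1, q, …, q ^ k`, so its determinant is
`∏_{i < j} (q ^ j - q ^ i)`. Writing each factor as `q ^ i * (q ^ (j - i) - 1)`, the powers of `q`
collect to `q ^ (j * (j - 1) / 2)` for each `j`, and `q ^ d - 1` occurs once for each of the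
`k + 1 - d` pairs with `j - i = d`.
-/

open Finset

theorem Matrix.det_of_pow_mul {R : Type*} [CommRing R] (q : R) (n : ℕ) :
    (Matrix.of fun i j : Fin n => q ^ (i.val * j.val)).det =
      ∏ j ∈ range n, ∏ i ∈ range j, (q ^ j - q ^ i) := by
  have hvdm : (Matrix.of fun i j : Fin n => q ^ (i.val * j.val)) =
      Matrix.vandermonde fun i => q ^ i.val := by
    ext i j
    simp [Matrix.vandermonde, pow_mul]
  rw [hvdm, Matrix.det_vandermonde, prod_comm' (t' := univ) (s' := Iio) (by simp),
    ← Fin.prod_univ_eq_prod_range (fun j => ∏ i ∈ range j, (q ^ j - q ^ i))]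
  refine prod_congr rfl fun j _ => ?_
  rw [← Nat.Iio_eq_range, ← Fin.map_valEmbedding_Iio, prod_map]
  rfl

theorem Finset.prod_range_pow_sub_pow {R : Type*} [CommRing R] (q : R) (j : ℕ) :
    ∏ i ∈ range j, (q ^ j - q ^ i) = q ^ (j * (j - 1) / 2) * ∏ d ∈ Icc 1 j, (q ^ d - 1) := by
  have hfactor : ∀ i ∈ range j, q ^ j - q ^ i = q ^ i * (q ^ (j - i) - 1) := by
    intro i hi
    rw [mul_sub_one, ← pow_add, Nat.add_sub_cancel' (mem_range.1 hi).le]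
  rw [prod_congr rfl hfactor, prod_mul_distrib, prod_pow_eq_pow_sum, sum_range_id]
  congr 1
  refine prod_nbij' (fun i => j - i) (fun d => j - d) ?_ ?_ ?_ ?_ (fun _ _ => rfl) <;>
    intro i hi <;> simp only [mem_range, mem_Icc] at hi ⊢ <;> omega

theorem Finset.prod_Icc_prod_Icc_eq_prod_pow {M : Type*} [CommMonoid M] (f : ℕ → M) (k : ℕ) :
    ∏ j ∈ Icc 1 k, ∏ d ∈ Icc 1 j, f d = ∏ d ∈ Icc 1 k, f d ^ (k + 1 - d) := by
  rw [prod_comm' (t' := Icc 1 k) (s' := fun d => Icc d k) (by intros; simp only [mem_Icc]; omega)]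
  simp only [prod_const, Nat.card_Icc]

theorem det_pow_mul_general (q : ℝ) (k : ℕ) :
    Matrix.det (Matrix.of fun i j : Fin (k + 1) => q ^ (i.val * j.val)) =
      (∏ l ∈ Finset.Icc 1 k, q ^ (l * (l - 1) / 2)) *
        ∏ j ∈ Finset.Icc 1 k, (q ^ j - 1) ^ (k + 1 - j) := by
  rw [Matrix.det_of_pow_mul, range_eq_Ico, prod_eq_prod_Ico_succ_bot (Nat.add_one_pos k),
    prod_range_zero, one_mul, zero_add, Ico_add_one_right_eq_Icc,
    prod_congr rfl fun j _ => prod_range_pow_sub_pow q j, prod_mul_distrib,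
    prod_Icc_prod_Icc_eq_prod_pow]

theorem det_pow_mul (q : ℝ) (k : ℕ) (hk : 1 ≤ k) :
    Matrix.det (Matrix.of fun i j : Fin (k + 1) => q ^ (i.val * j.val)) =
      (∏ l ∈ Finset.Icc 1 k, q ^ (l * (l - 1) / 2)) *
        ∏ j ∈ Finset.Icc 1 k, (q ^ j - 1) ^ (k + 1 - j) :=
  det_pow_mul_general q k
end

section
/- For every integer k ≥ 1 and every real t > 0, det((p_t(x_i, x_j))_{i,j=0}^{k}) = (2πt)^{−(k+1)/2} · e^{−2(k+1)(k+2)/(3tk)} · ∏_{j=1}^{k} (δ^{j} − 1)^{k+1−j}, where δ = e^{4/(t k²)}. -/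
/-- The one-dimensional heat kernel `p_t(a,b)`. -/
noncomputable def heatK (t a b : ℝ) : ℝ :=
    (Real.sqrt (2 * Real.pi * t))⁻¹ * Real.exp (-(a - b) ^ 2 / (2 * t))

/-- The equally spaced starting points `x_i = (2i - k)/k`. -/
noncomputable def xPt (k : ℕ) (i : Fin (k + 1)) : ℝ := (2 * (i : ℝ) - k) / k

/-!
With `x_i = a + h i`, the exponent `-(x_i - x_j)² / (2t) = -(h i)² / (2t) + (h² / t) i j - (h j)² / (2t)`
splits the kernel matrix as `(2πt)^(-1/2) D V D`, with `D` the diagonal of Gaussian weights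
`e^{-(h i)² / (2t)}` and `V` the Vandermonde matrix of the geometric nodes `q^i`, `q = e^{h² / t}`.
Factoring `q^j - q^i = q^i (q^(j-i) - 1)` and grouping the pairs `i < j` by `d = j - i` gives
`det V = q^(∑ i (n-1-i)) ∏_{d=1}^{n-1} (q^d - 1)^(n-d)`; the powers of `q` and the weights combine
into a single exponential whose exponent is a sum of `i` and `i²`.
-/

open Finset Real

theorem prod_fin_prod_Ioi_eq_prod_range_prod_Ioo {M : Type*} [CommMonoid M] (n : ℕ)
    (f : ℕ → ℕ → M) :
    ∏ i : Fin n, ∏ j ∈ Ioi i, f i j = ∏ i ∈ range n, ∏ j ∈ Ioo i n, f i j := by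
  rw [← Fin.prod_univ_eq_prod_range (fun i => ∏ j ∈ Ioo i n, f i j)]
  refine prod_congr rfl fun i _ => ?_
  rw [← Fin.map_valEmbedding_Ioi, prod_map]
  rfl

theorem prod_range_prod_Ioo_sub_eq_prod_Icc_pow {M : Type*} [CommMonoid M] (n : ℕ) (g : ℕ → M) :
    ∏ i ∈ range n, ∏ j ∈ Ioo i n, g (j - i) = ∏ d ∈ Icc 1 (n - 1), g d ^ (n - d) := by
  have shift : ∀ i ∈ range n, ∏ j ∈ Ioo i n, g (j - i) = ∏ d ∈ Icc 1 (n - 1 - i), g d := by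
    intro i hi
    rw [mem_range] at hi
    refine prod_nbij' (· - i) (· + i) ?_ ?_ ?_ ?_ fun _ _ => rfl
    all_goals intro a ha; simp only [mem_Ioo, mem_Icc] at ha ⊢; omega
  rw [prod_congr rfl shift, prod_comm' (t' := Icc 1 (n - 1)) (s' := fun d => range (n - d))
    (fun i d => by simp only [mem_range, mem_Icc]; omega)]
  exact prod_congr rfl fun d _ => by rw [prod_const, card_range]

theorem Matrix.det_vandermonde_pow {R : Type*} [CommRing R] (q : R) (n : ℕ) :
    (Matrix.vandermonde fun i : Fin n => q ^ (i : ℕ)).det =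
      q ^ (∑ i ∈ range n, i * (n - 1 - i)) * ∏ d ∈ Icc 1 (n - 1), (q ^ d - 1) ^ (n - d) := by
  have factor : ∀ i ∈ range n, ∏ j ∈ Ioo i n, (q ^ j - q ^ i) =
      q ^ (i * (n - 1 - i)) * ∏ j ∈ Ioo i n, (q ^ (j - i) - 1) := by
    intro i _
    have : ∀ j ∈ Ioo i n, q ^ j - q ^ i = q ^ i * (q ^ (j - i) - 1) := fun j hj => by
      rw [mul_sub, mul_one, ← pow_add, Nat.add_sub_cancel' (mem_Ioo.mp hj).1.le]
    rw [prod_congr rfl this, prod_mul_distrib, prod_const, Nat.card_Ioo, ← pow_mul,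
      Nat.sub_right_comm]
  rw [det_vandermonde, prod_fin_prod_Ioi_eq_prod_range_prod_Ioo n (fun i j => q ^ j - q ^ i),
    prod_congr rfl factor, prod_mul_distrib, prod_pow_eq_pow_sum,
    prod_range_prod_Ioo_sub_eq_prod_Icc_pow n (fun d => q ^ d - 1)]

theorem sum_range_mul_sub_two_mul {K : Type*} [Field K] [CharZero K] (c : K) (n : ℕ) :
    ∑ i ∈ range n, (i : K) * (c - 2 * i) = n * (n - 1) * (3 * c - 4 * n + 2) / 6 := by
  induction n with
  | zero => simp
  | succ n ih => rw [sum_range_succ, ih]; push_cast; ring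

theorem inv_sqrt_pow_eq_rpow {x : ℝ} (hx : 0 ≤ x) (n : ℕ) :
    (√x)⁻¹ ^ n = x ^ (-(n : ℝ) / 2) := by
  rw [sqrt_eq_rpow, ← rpow_neg hx, ← rpow_natCast, ← rpow_mul hx]
  ring_nf

theorem heatK_add_mul (t a h : ℝ) (i j : ℕ) :
    heatK t (a + h * i) (a + h * j) = (√(2 * π * t))⁻¹ *
      (exp (-(h * i) ^ 2 / (2 * t)) * (exp (h ^ 2 / t) ^ i) ^ j * exp (-(h * j) ^ 2 / (2 * t))) := by
  rw [heatK, ← pow_mul, ← exp_nat_mul, ← exp_add, ← exp_add]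
  congr 2
  push_cast
  ring

theorem det_heatK_add_mul (n : ℕ) {t : ℝ} (ht : 0 ≤ t) (a h : ℝ) :
    (Matrix.of fun i j : Fin n => heatK t (a + h * i) (a + h * j)).det =
      (2 * π * t) ^ (-(n : ℝ) / 2) * exp (-(h ^ 2 * ((n - 1) * n * (n + 1))) / (6 * t)) *
        ∏ d ∈ Icc 1 (n - 1), (exp (h ^ 2 / t) ^ d - 1) ^ (n - d) := by
  set w : Fin n → ℝ := fun i => exp (-(h * i) ^ 2 / (2 * t))
  have factor : (Matrix.of fun i j : Fin n => heatK t (a + h * i) (a + h * j)) =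
      (√(2 * π * t))⁻¹ • (Matrix.diagonal w *
        Matrix.vandermonde (fun i : Fin n => exp (h ^ 2 / t) ^ (i : ℕ)) * Matrix.diagonal w) := by
    ext i j
    simp only [Matrix.of_apply, Matrix.smul_apply, Matrix.mul_diagonal, Matrix.diagonal_mul,
      Matrix.vandermonde_apply, smul_eq_mul, heatK_add_mul, w]
  have weights : (∏ i, w i) * exp (h ^ 2 / t) ^ (∑ i ∈ range n, i * (n - 1 - i)) * ∏ i, w i =
      exp (-(h ^ 2 * ((n - 1) * n * (n + 1))) / (6 * t)) := by
    have cast_sum : ((∑ i ∈ range n, i * (n - 1 - i) : ℕ) : ℝ) =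
        ∑ i ∈ range n, (i : ℝ) * ((n - 1 : ℝ) - i) := by
      rw [Nat.cast_sum]
      refine sum_congr rfl fun i hi => ?_
      rw [Nat.sub_sub, Nat.cast_mul, Nat.cast_sub (by rw [add_comm]; exact mem_range.mp hi)]
      push_cast
      ring
    have prod_w : ∏ i, w i = exp (∑ i ∈ range n, -(h * i) ^ 2 / (2 * t)) := by
      rw [exp_sum, ← Fin.prod_univ_eq_prod_range (fun i => exp (-(h * i) ^ 2 / (2 * t)))]
    rw [prod_w, ← exp_nat_mul, cast_sum, ← exp_add, ← exp_add]
    congr 1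
    calc _ = h ^ 2 / t * ∑ i ∈ range n, (i : ℝ) * ((n - 1) - 2 * i) := by
          rw [mul_sum, sum_mul, ← sum_add_distrib, ← sum_add_distrib]
          exact sum_congr rfl fun i _ => by ring
      _ = _ := by rw [sum_range_mul_sub_two_mul]; ring
  rw [factor, Matrix.det_smul, Matrix.det_mul, Matrix.det_mul, Matrix.det_diagonal,
    Matrix.det_vandermonde_pow, Fintype.card_fin, inv_sqrt_pow_eq_rpow (by positivity), ← weights]
  ring

theorem det_heat_kernel_eq_general (k : ℕ) (t : ℝ) (ht : 0 < t) :
    Matrix.det (Matrix.of fun i j : Fin (k + 1) => heatK t (xPt k i) (xPt k j)) =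
      (2 * Real.pi * t) ^ (-(((k : ℝ) + 1) / 2)) *
        Real.exp (-2 * ((k : ℝ) + 1) * ((k : ℝ) + 2) / (3 * t * k)) *
        ∏ j ∈ Finset.Icc 1 k,
          (Real.exp (4 / (t * (k : ℝ) ^ 2)) ^ j - 1) ^ (k + 1 - j) := by
  -- `-k / k` rather than `-1`, so that `k = 0` (where `xPt 0 0 = 0`) is covered too.
  have xPt_eq : xPt k = fun i : Fin (k + 1) => (-k / k : ℝ) + 2 / k * (i : ℕ) :=
    funext fun i => by rw [xPt]; ring
  rw [xPt_eq, det_heatK_add_mul (k + 1) ht.le, Nat.add_sub_cancel]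
  push_cast
  have exponent : -((2 / k) ^ 2 * (((k : ℝ) + 1 - 1) * (k + 1) * (k + 1 + 1))) / (6 * t) =
      -2 * ((k : ℝ) + 1) * ((k : ℝ) + 2) / (3 * t * k) := by
    rcases eq_or_ne (k : ℝ) 0 with hk0 | hk0
    · simp [hk0]
    · field_simp; ring
  rw [exponent, show (2 / (k : ℝ)) ^ 2 / t = 4 / (t * k ^ 2) by ring, neg_div]

theorem det_heat_kernel_eq (k : ℕ) (hk : 1 ≤ k) (t : ℝ) (ht : 0 < t) :
    Matrix.det (Matrix.of fun i j : Fin (k + 1) => heatK t (xPt k i) (xPt k j)) =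
      (2 * Real.pi * t) ^ (-(((k : ℝ) + 1) / 2)) *
        Real.exp (-2 * ((k : ℝ) + 1) * ((k : ℝ) + 2) / (3 * t * k)) *
        ∏ j ∈ Finset.Icc 1 k,
          (Real.exp (4 / (t * (k : ℝ) ^ 2)) ^ j - 1) ^ (k + 1 - j) :=
  det_heat_kernel_eq_general k t ht
end

section
/- For every integer k ≥ 1 and every real t > 0, det((p_t(x_i, x_j))_{i,j=0}^{k}) ≥ (2πt)^{−(k+1)/2} · e^{−2(k+1)(k+2)/(3tk)} · (4/(t k²))^{k(k+1)/2}. -/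
noncomputable def wF (k : ℕ) (t : ℝ) (i : ℕ) : ℝ :=
  -(((2*(i:ℝ) - k)/k)^2)/(2*t) - 2*i/(t*k) + 1/(2*t)

lemma sumIdR (n : ℕ) : ∑ i ∈ Finset.range (n+1), (i:ℝ) = n*(n+1)/2 := by
  induction n with
  | zero => simp
  | succ m ih => rw [Finset.sum_range_succ, ih]; push_cast; ring

lemma sumSqR (n : ℕ) : ∑ i ∈ Finset.range (n+1), (i:ℝ)^2 = n*(n+1)*(2*n+1)/6 := by
  induction n with
  | zero => simp
  | succ m ih => rw [Finset.sum_range_succ, ih]; push_cast; ring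

lemma sumNat (k : ℕ) : ∑ i ∈ Finset.range (k+1), (k - i) = k*(k+1)/2 := by
  have := Finset.sum_range_reflect (fun i => i) (k+1)
  simp only [Nat.add_sub_cancel] at this
  rw [this, Finset.sum_range_id]
  simp [Nat.mul_comm]

lemma entry (k : ℕ) (hk : 1 ≤ k) (t : ℝ) (ht : 0 < t) (i j : Fin (k+1)) :
    heatK t (xPt k i) (xPt k j) =
    ((Real.sqrt (2*Real.pi*t))⁻¹ * Real.exp (wF k t i)) *
    (Real.exp (wF k t j) * ((Real.exp (4/(t*(k:ℝ)^2)) ^ (i:ℕ)) ^ (j:ℕ))) := by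
  have hk0 : (k:ℝ) ≠ 0 := Nat.cast_ne_zero.mpr (by omega)
  have ht0 : t ≠ 0 := ht.ne'
  have h1 : ((Real.exp (4/(t*(k:ℝ)^2)) ^ (i:ℕ)) ^ (j:ℕ))
      = Real.exp (((i:ℕ)*(j:ℕ) : ℕ) * (4/(t*(k:ℝ)^2))) := by
    rw [Real.exp_nat_mul, pow_mul]
  simp only [h1, heatK, xPt, mul_assoc, ← Real.exp_add]
  congr 1
  unfold wF
  push_cast
  field_simp
  ring

theorem det_heat_kernel_lower_bound (k : ℕ) (hk : 1 ≤ k) (t : ℝ) (ht : 0 < t) :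
    Matrix.det (Matrix.of fun i j : Fin (k + 1) => heatK t (xPt k i) (xPt k j)) ≥
      (2 * Real.pi * t) ^ (-(((k : ℝ) + 1) / 2)) *
        Real.exp (-2 * ((k : ℝ) + 1) * ((k : ℝ) + 2) / (3 * t * k)) *
        (4 / (t * (k : ℝ) ^ 2)) ^ (k * (k + 1) / 2) := by
  have hk0 : (k:ℝ) ≠ 0 := Nat.cast_ne_zero.mpr (by omega)
  have hkpos : (0:ℝ) < k := Nat.cast_pos.mpr (by omega)
  have ht0 : t ≠ 0 := ht.ne'
  set s : ℝ := 4 / (t * (k:ℝ)^2) with hs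
  have hspos : 0 < s := by rw [hs]; positivity
  set C : ℝ := (Real.sqrt (2*Real.pi*t))⁻¹ with hCdef
  have hCpos : 0 < C := by
    rw [hCdef]
    have : 0 < 2*Real.pi*t := by positivity
    positivity
  set V := Matrix.vandermonde (fun i : Fin (k+1) => Real.exp s ^ (i:ℕ)) with hV
  -- determinant factorization
  have hfac : Matrix.det (Matrix.of fun i j : Fin (k+1) => heatK t (xPt k i) (xPt k j))
      = (∏ i : Fin (k+1), (C * Real.exp (wF k t i))) *
        ((∏ i : Fin (k+1), Real.exp (wF k t i)) * V.det) := by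
    have h2 : (Matrix.of fun i j : Fin (k+1) => heatK t (xPt k i) (xPt k j))
        = Matrix.of fun i j : Fin (k+1) => (C * Real.exp (wF k t i)) *
            ((Matrix.of fun i j : Fin (k+1) => Real.exp (wF k t j) * V i j) i j) := by
      ext i j
      simp only [Matrix.of_apply, hV, Matrix.vandermonde]
      exact entry k hk t ht i j
    rw [h2, Matrix.det_mul_column, Matrix.det_mul_row]
  -- Vandermonde bound
  have hVdet : V.det = ∏ i : Fin (k+1), ∏ j ∈ Finset.Ioi i,
      (Real.exp s ^ (j:ℕ) - Real.exp s ^ (i:ℕ)) := Matrix.det_vandermonde _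
  have hbound : ∀ i : Fin (k+1), ∀ j ∈ Finset.Ioi i,
      Real.exp s ^ (i:ℕ) * s ≤ Real.exp s ^ (j:ℕ) - Real.exp s ^ (i:ℕ) := by
    intro i j hj
    have hij : (i:ℕ) < (j:ℕ) := Fin.lt_iff_val_lt_val.mp (Finset.mem_Ioi.mp hj)
    have h1 : Real.exp s ^ (i:ℕ) * (Real.exp s ^ ((j:ℕ) - (i:ℕ)) - 1)
        = Real.exp s ^ (j:ℕ) - Real.exp s ^ (i:ℕ) := by
      rw [mul_sub, mul_one, ← pow_add, Nat.add_sub_cancel' hij.le]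
    rw [← h1]
    apply mul_le_mul_of_nonneg_left _ (by positivity)
    have h2 : Real.exp s ≤ Real.exp s ^ ((j:ℕ) - (i:ℕ)) :=
      le_self_pow₀ (Real.one_le_exp hspos.le) (by omega)
    have h3 : s + 1 ≤ Real.exp s := Real.add_one_le_exp s
    linarith
  set T : ℝ := ∑ i : Fin (k+1), ((k:ℝ) - (i:ℕ)) * ((i:ℕ) * s) with hT
  have hVge : Real.exp T * s ^ (k*(k+1)/2) ≤ V.det := by
    rw [hVdet]
    have step1 : ∀ i : Fin (k+1), ∏ j ∈ Finset.Ioi i, (Real.exp s ^ (i:ℕ) * s)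
        = Real.exp (((k - (i:ℕ) : ℕ):ℝ) * ((i:ℕ) * s)) * s ^ (k - (i:ℕ)) := by
      intro i
      rw [Finset.prod_const, Fin.card_Ioi, Nat.add_sub_cancel, mul_pow, ← Real.exp_nat_mul,
        ← Real.exp_nat_mul]
    have hle : ∏ i : Fin (k+1), ∏ j ∈ Finset.Ioi i, (Real.exp s ^ (i:ℕ) * s)
        ≤ ∏ i : Fin (k+1), ∏ j ∈ Finset.Ioi i, (Real.exp s ^ (j:ℕ) - Real.exp s ^ (i:ℕ)) := by
      apply Finset.prod_le_prod
      · intro i _; exact Finset.prod_nonneg fun j _ => by positivity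
      · intro i _
        exact Finset.prod_le_prod (fun j _ => by positivity) (fun j hj => hbound i j hj)
    refine le_trans (le_of_eq ?_) hle
    rw [Finset.prod_congr rfl fun i _ => step1 i, Finset.prod_mul_distrib, ← Real.exp_sum,
      Finset.prod_pow_eq_pow_sum]
    congr 2
    · rw [hT]
      apply Finset.sum_congr rfl
      intro i _
      rw [Nat.cast_sub (Fin.is_le i)]
    · exact ((Fin.sum_univ_eq_sum_range (fun i => k - i) (k+1)).trans (sumNat k)).symm
  -- sums
  have hS1 : ∑ i : Fin (k+1), ((i:ℕ):ℝ) = k*(k+1)/2 := by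
    rw [Fin.sum_univ_eq_sum_range (fun i => (i:ℝ))]; exact sumIdR k
  have hS2 : ∑ i : Fin (k+1), ((i:ℕ):ℝ)^2 = k*(k+1)*(2*k+1)/6 := by
    rw [Fin.sum_univ_eq_sum_range (fun i => (i:ℝ)^2)]; exact sumSqR k
  have hS3 : ∑ i : Fin (k+1), ((k:ℝ)*((i:ℕ):ℝ) - 2*((i:ℕ):ℝ)^2)
      = (k:ℝ)*((k:ℝ)*((k:ℝ)+1)/2) - 2*((k:ℝ)*((k:ℝ)+1)*(2*(k:ℝ)+1)/6) := by
    rw [Finset.sum_sub_distrib, ← Finset.mul_sum, ← Finset.mul_sum, hS1, hS2]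
  set W : ℝ := ∑ i : Fin (k+1), wF k t i with hW
  have hexp : W + (W + T) = -2*((k:ℝ)+1)*((k:ℝ)+2)/(3*t*(k:ℝ)) := by
    have hsum : W + (W + T)
        = ∑ i : Fin (k+1), (4/(t*(k:ℝ)^2) * ((k:ℝ)*((i:ℕ):ℝ) - 2*((i:ℕ):ℝ)^2)) := by
      rw [hW, hT, ← Finset.sum_add_distrib, ← Finset.sum_add_distrib]
      apply Finset.sum_congr rfl
      intro i _
      unfold wF
      rw [hs]
      field_simp
      ring
    rw [hsum, ← Finset.mul_sum, hS3]
    field_simp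
    ring
  -- prefactor products
  have hA : (∏ i : Fin (k+1), (C * Real.exp (wF k t i))) = C^(k+1) * Real.exp W := by
    rw [Finset.prod_mul_distrib, Finset.prod_const, Real.exp_sum, Finset.card_univ,
      Fintype.card_fin]
  have hB : (∏ i : Fin (k+1), Real.exp (wF k t i)) = Real.exp W := by
    rw [Real.exp_sum]
  have hCpow : C^(k+1) = (2 * Real.pi * t) ^ (-(((k : ℝ) + 1) / 2)) := by
    have hx : (0:ℝ) < 2*Real.pi*t := by positivity
    rw [hCdef, Real.sqrt_eq_rpow, ← Real.rpow_neg_one ((2*Real.pi*t) ^ ((1:ℝ)/2)),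
      ← Real.rpow_natCast (((2*Real.pi*t) ^ ((1:ℝ)/2)) ^ (-1:ℝ)) (k+1),
      ← Real.rpow_mul (by positivity), ← Real.rpow_mul hx.le]
    congr 1
    push_cast
    ring
  rw [ge_iff_le, hfac, hA, hB]
  have key : (2 * Real.pi * t) ^ (-(((k : ℝ) + 1) / 2)) *
        Real.exp (-2 * ((k : ℝ) + 1) * ((k : ℝ) + 2) / (3 * t * k)) * s ^ (k * (k + 1) / 2)
      = C^(k+1) * Real.exp W * (Real.exp W * (Real.exp T * s ^ (k*(k+1)/2))) := by
    rw [← hexp, hCpow, Real.exp_add, Real.exp_add]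
    ring
  rw [key]
  gcongr
end

section
/- There exists an integer k₀ such that for all integers k ≥ k₀, det((p_2(x_i, x_j))_{i,j=0}^{k}) ≥ k^{−k²}. -/
/-!
Since `-(a - b)² / 4 = -a² / 4 - b² / 4 + a b / 2`, the matrix `(p_2(x_i, x_j))` is
`diag(u) · (exp (x_i x_j / 2)) · diag(w)` with Gaussian weights, whose products `u_i w_i` are at
least `1/8` because `|x_i| ≤ 1`. Expanding `exp (x_i x_j / 2) = ∑ₘ (x_i x_j)ᵐ / (2ᵐ m!)`, the
terms `m ≤ k` add up to `V D Vᵀ` with `V` the Vandermonde matrix of the `x_i` and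
`D = diag (1 / (2ᵐ m!))`, and the remaining terms form a positive semidefinite matrix. The
determinant does not decrease when a positive semidefinite matrix is added, so it is at least
`det V² · det D = 2^T sf(k) / k^(k² + k)` with `T = k (k + 1) / 2`, and the claim reduces to
`8^(k+1) k^k ≤ 2^T sf(k)`, which holds for `k ≥ 6`.
-/

open Matrix Finset Real
open scoped MatrixOrder Nat

namespace Matrix

variable {n : Type*} [Fintype n]

theorem PosSemidef.one_le_det_one_add [DecidableEq n] {C : Matrix n n ℝ} (hC : C.PosSemidef) :
    1 ≤ (1 + C).det := by
  have h := (PosSemidef.one.add hC).1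
  rw [h.det_eq_prod_eigenvalues]
  refine Finset.one_le_prod fun i _ => ?_
  have hunit : star ⇑(h.eigenvectorBasis i) ⬝ᵥ ⇑(h.eigenvectorBasis i) = 1 := by
    rw [dotProduct_comm, ← EuclideanSpace.inner_eq_star_dotProduct, real_inner_self_eq_norm_sq,
      h.eigenvectorBasis.orthonormal.1 i, one_pow]
  rw [h.eigenvalues_eq i, add_mulVec, one_mulVec, dotProduct_add, hunit]
  simpa using hC.dotProduct_mulVec_nonneg (h.eigenvectorBasis i)

theorem PosSemidef.det_le_det_add [DecidableEq n] {A B : Matrix n n ℝ} (hA : A.PosSemidef)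
    (hB : B.PosSemidef) : A.det ≤ (A + B).det := by
  by_cases hA0 : A.det = 0
  · exact hA0 ▸ (hA.add hB).det_nonneg
  set S := CFC.sqrt A
  have hSS : S * S = A := CFC.sqrt_mul_sqrt_self A hA.nonneg
  have hdetS : S.det * S.det = A.det := by rw [← det_mul, hSS]
  have hS : IsUnit S.det := isUnit_iff_ne_zero.mpr fun h => hA0 (by rw [← hdetS, h, zero_mul])
  have hC : (S⁻¹ * B * S⁻¹).PosSemidef := by
    have := hB.conjTranspose_mul_mul_same S⁻¹
    rwa [conjTranspose_nonsing_inv, (CFC.sqrt_nonneg A).posSemidef.1.eq] at this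
  have hAB : A + B = S * (1 + S⁻¹ * B * S⁻¹) * S := by
    simp only [mul_add, add_mul, mul_one, hSS, Matrix.mul_assoc, nonsing_inv_mul _ hS,
      ← Matrix.mul_assoc S S⁻¹, mul_nonsing_inv _ hS, Matrix.one_mul]
  rw [hAB, det_mul, det_mul, mul_right_comm, hdetS]
  exact le_mul_of_one_le_right hA.det_nonneg hC.one_le_det_one_add

theorem PosSemidef.of_hasSum {ι : Type*} {f : ι → Matrix n n ℝ} {A : Matrix n n ℝ}
    (hf : HasSum f A) (h : ∀ i, (f i).PosSemidef) : A.PosSemidef := by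
  refine .of_dotProduct_mulVec_nonneg ?_ fun x => ?_
  · exact hf.matrix_conjTranspose.unique (by simpa only [(h _).1.eq] using hf)
  · let q : Matrix n n ℝ →+ ℝ :=
      { toFun := fun M => star x ⬝ᵥ M *ᵥ x
        map_zero' := by simp
        map_add' := fun M N => by simp [add_mulVec, dotProduct_add] }
    have hq : Continuous q := by
      simp only [q, AddMonoidHom.coe_mk, ZeroHom.coe_mk]; fun_prop
    exact (hf.map q hq).nonneg fun i => (h i).dotProduct_mulVec_nonneg x

theorem hasSum_vecMulVec_pow_exp {ι : Type*} (s : ℝ) (x : ι → ℝ) :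
    HasSum (fun m : ℕ => (s ^ m / m !) • vecMulVec (fun i => x i ^ m) (fun i => x i ^ m))
      (of fun i j => rexp (s * (x i * x j))) := by
  refine Pi.hasSum.2 fun i => Pi.hasSum.2 fun j => ?_
  have hterm : ∀ m : ℕ, (s ^ m / m !) * (x i ^ m * x j ^ m) = (s * (x i * x j)) ^ m / m ! :=
    fun m => by ring
  have h := NormedSpace.expSeries_div_hasSum_exp (s * (x i * x j))
  rw [← Real.exp_eq_exp_ℝ] at h
  simpa [vecMulVec_apply, hterm] using h

theorem vandermonde_mul_diagonal_mul_transpose {R : Type*} [CommRing R] {n : ℕ} (d : ℕ → R)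
    (x : Fin n → R) :
    vandermonde x * diagonal (fun l : Fin n => d l) * (vandermonde x)ᵀ =
      ∑ m ∈ range n, d m • vecMulVec (fun i => x i ^ m) (fun i => x i ^ m) := by
  ext i j
  rw [mul_apply]
  simp only [mul_diagonal, vandermonde_apply, transpose_apply, sum_apply,
    Matrix.smul_apply, vecMulVec_apply, smul_eq_mul]
  rw [← Fin.sum_univ_eq_sum_range (fun m => d m * (x i ^ m * x j ^ m))]
  exact sum_congr rfl fun l _ => by ring

theorem det_vandermonde_sq_mul_prod_le_det_of_exp {n : ℕ} {s : ℝ} (hs : 0 ≤ s)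
    (x : Fin n → ℝ) :
    (vandermonde x).det ^ 2 * ∏ l : Fin n, s ^ (l : ℕ) / (l : ℕ)! ≤
      (of fun i j => rexp (s * (x i * x j))).det := by
  have hterm (m : ℕ) :
      ((s ^ m / m !) • vecMulVec (fun i => x i ^ m) (fun i => x i ^ m)).PosSemidef :=
    (posSemidef_vecMulVec_self_star _).smul (by positivity)
  have hhead := posSemidef_sum (range n) fun m _ => hterm m
  have htail := PosSemidef.of_hasSum ((hasSum_nat_add_iff' n).2 (hasSum_vecMulVec_pow_exp s x))
    fun m => hterm (m + n)
  have h := hhead.det_le_det_add htail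
  rwa [add_sub_cancel, ← vandermonde_mul_diagonal_mul_transpose, det_mul, det_mul, det_transpose,
    det_diagonal, mul_right_comm, ← sq] at h

theorem det_vandermonde_mul {n : ℕ} {R : Type*} [CommRing R] (a : R) (v : Fin n → R) :
    (vandermonde fun i => a * v i).det = a ^ (∑ i ∈ range n, i) * (vandermonde v).det := by
  have h : (vandermonde fun i => a * v i) =
      vandermonde v * diagonal fun j : Fin n => a ^ (j : ℕ) := by
    ext i j
    simp [mul_pow, mul_comm]
  rw [h, det_mul, det_diagonal, prod_pow_eq_pow_sum, Fin.sum_univ_eq_sum_range (fun i => i),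
    mul_comm]

end Matrix

theorem det_of_heatK {n : Type*} [Fintype n] [DecidableEq n] (t : ℝ) (x : n → ℝ) :
    (of fun i j => heatK t (x i) (x j)).det =
      (∏ i, (√(2 * π * t))⁻¹ * rexp (-x i ^ 2 / t)) *
        (of fun i j => rexp (t⁻¹ * (x i * x j))).det := by
  set w : n → ℝ := fun i => rexp (-x i ^ 2 / (2 * t))
  have hfactor : (of fun i j => heatK t (x i) (x j)) =
      diagonal ((√(2 * π * t))⁻¹ • w) * (of fun i j => rexp (t⁻¹ * (x i * x j))) *
        diagonal w := by
    ext i j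
    simp only [heatK, w, diagonal_mul, mul_diagonal, of_apply, Pi.smul_apply, smul_eq_mul,
      mul_assoc, ← Real.exp_add]
    ring_nf
  have hw (i : n) : w i * w i = rexp (-x i ^ 2 / t) := by
    rw [← Real.exp_add]
    ring_nf
  rw [hfactor, det_mul, det_mul, det_diagonal, det_diagonal, mul_right_comm, ← prod_mul_distrib]
  simp only [Pi.smul_apply, smul_eq_mul, mul_assoc, hw]

theorem inv_eight_le_inv_sqrt_mul_exp {a : ℝ} (ha : a ^ 2 ≤ 1) :
    (8 : ℝ)⁻¹ ≤ (√(2 * π * 2))⁻¹ * rexp (-a ^ 2 / 2) := by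
  have hsqrt : √(2 * π * 2) ≤ 4 := Real.sqrt_le_iff.2 ⟨by norm_num, by nlinarith [pi_le_four]⟩
  have hexp : (2 : ℝ)⁻¹ ≤ rexp (-a ^ 2 / 2) := by
    nlinarith [Real.add_one_le_exp (-a ^ 2 / 2)]
  calc (8 : ℝ)⁻¹ = 4⁻¹ * 2⁻¹ := by norm_num
    _ ≤ _ := mul_le_mul (inv_anti₀ (by positivity) hsqrt) hexp (by norm_num) (by positivity)

theorem xPt_sq_le_one (k : ℕ) (i : Fin (k + 1)) : xPt k i ^ 2 ≤ 1 := by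
  have hi : ((i : ℕ) : ℝ) ≤ k := by exact_mod_cast Fin.is_le i
  rw [xPt, div_pow]
  exact div_le_one_of_le₀ (by nlinarith [(i : ℕ).cast_nonneg (α := ℝ)]) (by positivity)

theorem det_vandermonde_xPt {k : ℕ} (hk : k ≠ 0) :
    (vandermonde (xPt k)).det = (2 / k) ^ (∑ i ∈ range (k + 1), i) * sf k := by
  have hx : xPt k = fun i : Fin (k + 1) => 2 / k * ((i : ℕ) : ℝ) + -1 := by
    ext i
    rw [xPt]
    field_simp
    ring
  rw [hx, det_vandermonde_add, det_vandermonde_mul, det_vandermonde_id_eq_superFactorial]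

theorem prod_inv_two_pow_div_factorial (k : ℕ) :
    ∏ l : Fin (k + 1), (2 : ℝ)⁻¹ ^ (l : ℕ) / (l : ℕ)! =
      ((2 : ℝ) ^ (∑ i ∈ range (k + 1), i) * sf k)⁻¹ := by
  rw [Fin.prod_univ_eq_prod_range (fun l => (2 : ℝ)⁻¹ ^ l / l !), prod_div_distrib,
    prod_pow_eq_pow_sum, ← Nat.prod_range_succ_factorial, Nat.cast_prod, inv_pow, div_eq_mul_inv,
    mul_inv]

theorem det_vandermonde_xPt_sq_mul_prod {k : ℕ} (hk : k ≠ 0) :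
    (vandermonde (xPt k)).det ^ 2 * ∏ l : Fin (k + 1), (2 : ℝ)⁻¹ ^ (l : ℕ) / (l : ℕ)! =
      (2 : ℝ) ^ (∑ i ∈ range (k + 1), i) * (sf k : ℝ) / (k : ℝ) ^ (k ^ 2 + k) := by
  have hsf : (sf k : ℝ) ≠ 0 := by
    rw [← Nat.prod_range_succ_factorial, Nat.cast_prod]
    exact prod_ne_zero_iff.2 fun l _ => by positivity
  have hexp : k ^ 2 + k = (∑ i ∈ range (k + 1), i) * 2 := by
    rw [sum_range_id_mul_two, Nat.add_sub_cancel]; ring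
  rw [det_vandermonde_xPt hk, prod_inv_two_pow_div_factorial, hexp, pow_mul, div_pow]
  field_simp

theorem sq_le_two_pow_succ (k : ℕ) : k ^ 2 ≤ 2 ^ (k + 1) := by
  rcases lt_or_ge k 3 with hk | hk
  · interval_cases k <;> norm_num
  induction k, hk using Nat.le_induction with
  | base => norm_num
  | succ k hk ih =>
    rw [pow_succ 2]
    nlinarith

theorem pow_self_le_two_pow_sum_range (k : ℕ) : k ^ k ≤ 2 ^ ∑ i ∈ range (k + 1), i := by
  refine (Nat.pow_le_pow_iff_left two_ne_zero).1 ?_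
  calc (k ^ k) ^ 2 = (k ^ 2) ^ k := by ring
    _ ≤ (2 ^ (k + 1)) ^ k := Nat.pow_le_pow_left (sq_le_two_pow_succ k) k
    _ = (2 ^ ∑ i ∈ range (k + 1), i) ^ 2 := by
      rw [← pow_mul, ← pow_mul, sum_range_id_mul_two, Nat.add_sub_cancel]

theorem eight_pow_succ_le_superFactorial {k : ℕ} (hk : 6 ≤ k) : 8 ^ (k + 1) ≤ sf k := by
  induction k, hk using Nat.le_induction with
  | base => decide
  | succ k hk ih =>
    rw [pow_succ, Nat.superFactorial_succ, mul_comm]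
    have h8 : 8 ≤ (k + 1)! := (Nat.factorial_le (by omega : 4 ≤ k + 1)).trans' (by decide)
    exact Nat.mul_le_mul h8 ih

theorem inv_pow_sq_le_inv_eight_pow_mul_div {k : ℕ} (hk : 6 ≤ k) :
    ((k : ℝ) ^ k ^ 2)⁻¹ ≤
      (8⁻¹ : ℝ) ^ (k + 1) *
        (2 ^ (∑ i ∈ range (k + 1), i) * (sf k : ℝ) / (k : ℝ) ^ (k ^ 2 + k)) := by
  have hk0 : (0 : ℝ) < k := by norm_cast; omega
  have hcount : (8 : ℝ) ^ (k + 1) * k ^ k ≤ (sf k : ℝ) * 2 ^ (∑ i ∈ range (k + 1), i) := by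
    exact_mod_cast Nat.mul_le_mul (eight_pow_succ_le_superFactorial hk)
      (pow_self_le_two_pow_sum_range k)
  rw [inv_pow, pow_add (k : ℝ)]
  field_simp
  linarith [mul_le_mul_of_nonneg_left hcount (pow_nonneg hk0.le (k ^ 2))]

theorem det_heat_kernel_time_two_lower_bound :
    ∃ k₀ : ℕ, ∀ k : ℕ, k₀ ≤ k →
      Matrix.det (Matrix.of fun i j : Fin (k + 1) => heatK 2 (xPt k i) (xPt k j)) ≥
        (((k : ℝ) ^ (k ^ 2)))⁻¹ := by
  refine ⟨6, fun k hk => ?_⟩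
  have hweights : (8⁻¹ : ℝ) ^ (k + 1) ≤ ∏ i, (√(2 * π * 2))⁻¹ * rexp (-xPt k i ^ 2 / 2) := by
    simpa using prod_le_prod (fun _ _ => by norm_num)
      fun i (_ : i ∈ univ) => inv_eight_le_inv_sqrt_mul_exp (xPt_sq_le_one k i)
  have hgram := det_vandermonde_sq_mul_prod_le_det_of_exp (s := 2⁻¹) (by norm_num) (xPt k)
  rw [det_vandermonde_xPt_sq_mul_prod (by omega)] at hgram
  rw [ge_iff_le, det_of_heatK]
  exact (inv_pow_sq_le_inv_eight_pow_mul_div hk).trans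
    (mul_le_mul hweights hgram (by positivity) (prod_nonneg fun _ _ => by positivity))
end

section
/- For every integer k ≥ 1, every real t ≥ 1/√(2πe), every h > 0 and all vectors (a_0,…,a_k), (b_0,…,b_k) ∈ ℝ^{k+1}, one has | det((p_t(a_i, b_j))_{i,j=0}^{k}) − (2h)^{−(k+1)} ∫_{−h}^{h} ⋯ ∫_{−h}^{h} det((p_t(a_i + s_i, b_j))_{i,j=0}^{k}) ds_0 ⋯ ds_k | ≤ 2h(k+1)² · k!. -/
/-!
If `t ≥ 1/√(2πe)`, every entry `p_t(a, b)` lies in `[0, 1]`, and `a ↦ p_t(a, b)` is 1-Lipschitz: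
the derivative `-(a - b)/t · p_t(a, b)` has maximal modulus `1/(√(2πe) t)`, attained at
`|a - b| = √t`, which is exactly where the threshold on `t` comes from. Shifting every `a_i` by at
most `h` therefore moves each entry by at most `h`, each of the `(k+1)!` products in the Leibniz
expansion by at most `(k+1) h`, and the determinant by at most `(k+1)! (k+1) h`. The average of the
shifted determinants over the cube `[-h, h]^{k+1}` stays within the same distance, since a closed
ball is convex.
-/

open MeasureTheory

open Real

theorem Finset.abs_prod_sub_prod_le {ι : Type*} (s : Finset ι) {f g : ι → ℝ} {ε : ℝ}
    (hε : 0 ≤ ε) (hf : ∀ i, |f i| ≤ 1) (hg : ∀ i, |g i| ≤ 1) (hfg : ∀ i, |f i - g i| ≤ ε) :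
    |∏ i ∈ s, f i - ∏ i ∈ s, g i| ≤ s.card * ε := by
  classical
  induction s using Finset.induction with
  | empty => simp
  | @insert a s ha ih =>
    rw [prod_insert ha, prod_insert ha, card_insert_of_notMem ha]
    have hpf : |∏ i ∈ s, f i| ≤ 1 := by
      rw [abs_prod]
      exact prod_le_one (fun i _ => abs_nonneg _) (fun i _ => hf i)
    calc |f a * ∏ i ∈ s, f i - g a * ∏ i ∈ s, g i|
        = |(f a - g a) * ∏ i ∈ s, f i + g a * (∏ i ∈ s, f i - ∏ i ∈ s, g i)| := by ring_nf
      _ ≤ |f a - g a| * |∏ i ∈ s, f i| + |g a| * |∏ i ∈ s, f i - ∏ i ∈ s, g i| := by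
          rw [← abs_mul, ← abs_mul]; exact abs_add_le _ _
      _ ≤ ε * 1 + 1 * (s.card * ε) := by gcongr; exacts [hfg a, hg a]
      _ = ((s.card + 1 : ℕ) : ℝ) * ε := by push_cast; ring

theorem Matrix.abs_det_sub_det_le {n : Type*} [Fintype n] [DecidableEq n]
    {A B : Matrix n n ℝ} {ε : ℝ} (hε : 0 ≤ ε)
    (hA : ∀ i j, |A i j| ≤ 1) (hB : ∀ i j, |B i j| ≤ 1) (hAB : ∀ i j, |A i j - B i j| ≤ ε) :
    |A.det - B.det| ≤ (Fintype.card n).factorial * (Fintype.card n * ε) := by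
  have hterm (σ : Equiv.Perm n) :
      |Equiv.Perm.sign σ • ∏ i, A (σ i) i - Equiv.Perm.sign σ • ∏ i, B (σ i) i|
        ≤ Fintype.card n * ε := by
    have habs (x : ℝ) : |Equiv.Perm.sign σ • x| = |x| := by
      rcases Int.units_eq_one_or (Equiv.Perm.sign σ) with hσ | hσ <;> simp [hσ]
    rw [← smul_sub, habs]
    exact Finset.univ.abs_prod_sub_prod_le hε (fun i => hA _ _) (fun i => hB _ _)
      (fun i => hAB _ _)
  calc |A.det - B.det|
      = |∑ σ : Equiv.Perm n,
          (Equiv.Perm.sign σ • ∏ i, A (σ i) i - Equiv.Perm.sign σ • ∏ i, B (σ i) i)| := by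
        rw [det_apply, det_apply, Finset.sum_sub_distrib]
    _ ≤ ∑ σ : Equiv.Perm n,
          |Equiv.Perm.sign σ • ∏ i, A (σ i) i - Equiv.Perm.sign σ • ∏ i, B (σ i) i| :=
        Finset.abs_sum_le_sum_abs _ _
    _ ≤ ∑ _σ : Equiv.Perm n, (Fintype.card n : ℝ) * ε := Finset.sum_le_sum fun σ _ => hterm σ
    _ = _ := by rw [Finset.sum_const, Finset.card_univ, Fintype.card_perm, nsmul_eq_mul]

theorem norm_sub_setAverage_le {α E : Type*} [MeasurableSpace α] [NormedAddCommGroup E]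
    [NormedSpace ℝ E] [CompleteSpace E] {μ : Measure α} {s : Set α} {f : α → E} {c : E} {C : ℝ}
    (hs : MeasurableSet s) (hμ₀ : μ s ≠ 0) (hμ : μ s ≠ ⊤) (hf : IntegrableOn f s μ)
    (hbound : ∀ x ∈ s, ‖c - f x‖ ≤ C) :
    ‖c - ⨍ x in s, f x ∂μ‖ ≤ C := by
  have hmem : ⨍ x in s, f x ∂μ ∈ Metric.closedBall c C :=
    (convex_closedBall c C).set_average_mem Metric.isClosed_closedBall hμ₀ hμ
      ((ae_restrict_mem hs).mono fun x hx => by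
        rw [Metric.mem_closedBall, dist_comm, dist_eq_norm]; exact hbound x hx) hf
  rwa [Metric.mem_closedBall, dist_comm, dist_eq_norm] at hmem

theorem Real.mul_exp_neg_sq_div_two_le (v : ℝ) : v * exp (-v ^ 2 / 2) ≤ exp (-1 / 2) := by
  have hv : v ≤ exp ((v ^ 2 - 1) / 2) := by
    -- `v ≤ (v ^ 2 + 1) / 2 ≤ exp ((v ^ 2 - 1) / 2)`
    nlinarith [add_one_le_exp ((v ^ 2 - 1) / 2), sq_nonneg (v - 1)]
  calc v * exp (-v ^ 2 / 2) ≤ exp ((v ^ 2 - 1) / 2) * exp (-v ^ 2 / 2) := by gcongr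
    _ = exp (-1 / 2) := by rw [← exp_add]; ring_nf

theorem Real.sqrt_two_pi_mul_exp_one_le : √(2 * π * exp 1) ≤ 2 * π := by
  rw [sqrt_le_left (by positivity)]
  nlinarith [pi_gt_three, exp_one_lt_d9]

theorem heatK_nonneg (t a b : ℝ) : 0 ≤ heatK t a b := by
  unfold heatK; positivity

theorem heatK_le_inv_sqrt {t : ℝ} (ht : 0 ≤ t) (a b : ℝ) : heatK t a b ≤ (√(2 * π * t))⁻¹ := by
  unfold heatK
  refine mul_le_of_le_one_right (by positivity) (exp_le_one_iff.2 ?_)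
  exact div_nonpos_of_nonpos_of_nonneg (neg_nonpos.2 (sq_nonneg _)) (by positivity)

theorem hasDerivAt_heatK {t : ℝ} (ht : t ≠ 0) (b x : ℝ) :
    HasDerivAt (fun y => heatK t y b) (-(x - b) / t * heatK t x b) x := by
  have hexp := ((((hasDerivAt_id x).sub_const b).pow 2).neg.div_const (2 * t)).exp
  refine (hexp.const_mul (√(2 * π * t))⁻¹).congr_deriv ?_
  simp only [heatK, id, Pi.neg_apply, Pi.pow_apply]
  field_simp
  ring

theorem abs_div_mul_heatK_le {t : ℝ} (ht : 0 < t) (b x : ℝ) :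
    |(x - b) / t * heatK t x b| ≤ (√(2 * π * exp 1) * t)⁻¹ := by
  set v := |x - b| / √t
  have hv : (x - b) ^ 2 / (2 * t) = v ^ 2 / 2 := by
    rw [div_pow, sq_sqrt ht.le, sq_abs]; ring
  have hsplit : √(2 * π * exp 1) = √(2 * π) * exp (1 / 2) := by
    rw [sqrt_mul (by positivity), exp_half]
  have heq : |(x - b) / t * heatK t x b| = v * exp (-v ^ 2 / 2) / (√(2 * π) * t) := by
    rw [abs_mul, abs_of_nonneg (heatK_nonneg t x b), heatK, neg_div, hv, abs_div,
      abs_of_pos ht, sqrt_mul (by positivity)]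
    field_simp
    simp only [v]
    field_simp
  rw [heq, hsplit, div_le_iff₀ (by positivity)]
  calc v * exp (-v ^ 2 / 2) ≤ exp (-1 / 2) := mul_exp_neg_sq_div_two_le v
    _ = _ := by
      field_simp
      rw [← exp_add]; norm_num

theorem abs_heatK_sub_heatK_le {t : ℝ} (ht : 0 < t) (b x y : ℝ) :
    |heatK t x b - heatK t y b| ≤ (√(2 * π * exp 1) * t)⁻¹ * |x - y| := by
  have hderiv (z : ℝ) : ‖-(z - b) / t * heatK t z b‖ ≤ (√(2 * π * exp 1) * t)⁻¹ := by
    rw [Real.norm_eq_abs, neg_div, neg_mul, abs_neg]; exact abs_div_mul_heatK_le ht b z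
  simpa only [Real.norm_eq_abs] using
    convex_univ.norm_image_sub_le_of_norm_hasDerivWithin_le
    (fun z _ => (hasDerivAt_heatK ht.ne' b z).hasDerivWithinAt)
    (fun z _ => hderiv z) (Set.mem_univ y) (Set.mem_univ x)

theorem pos_of_one_le_sqrt_two_pi_exp_mul {t : ℝ} (ht : 1 ≤ √(2 * π * exp 1) * t) : 0 < t :=
  pos_of_mul_pos_right (one_pos.trans_le ht) (sqrt_nonneg _)

theorem abs_heatK_le_one {t : ℝ} (ht : 1 ≤ √(2 * π * exp 1) * t) (a b : ℝ) :
    |heatK t a b| ≤ 1 := by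
  have ht₀ := pos_of_one_le_sqrt_two_pi_exp_mul ht
  have h2pi : 1 ≤ 2 * π * t :=
    ht.trans (mul_le_mul_of_nonneg_right sqrt_two_pi_mul_exp_one_le ht₀.le)
  rw [abs_of_nonneg (heatK_nonneg t a b)]
  refine (heatK_le_inv_sqrt ht₀.le a b).trans (inv_le_one_of_one_le₀ ?_)
  exact one_le_sqrt.2 h2pi

theorem abs_heatK_sub_heatK_le_abs_sub {t : ℝ} (ht : 1 ≤ √(2 * π * exp 1) * t) (b x y : ℝ) :
    |heatK t x b - heatK t y b| ≤ |x - y| := by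
  refine (abs_heatK_sub_heatK_le (pos_of_one_le_sqrt_two_pi_exp_mul ht) b x y).trans ?_
  exact mul_le_of_le_one_left (abs_nonneg _) (inv_le_one_of_one_le₀ ht)

theorem abs_det_heatK_sub_det_heatK_shift_le {n : Type*} [Fintype n] [DecidableEq n] {t h : ℝ}
    (ht : 1 ≤ √(2 * π * exp 1) * t) (hh : 0 ≤ h) (a b s : n → ℝ) (hs : ∀ i, |s i| ≤ h) :
    |(Matrix.of fun i j => heatK t (a i) (b j)).det -
        (Matrix.of fun i j => heatK t (a i + s i) (b j)).det| ≤
      (Fintype.card n).factorial * (Fintype.card n * h) :=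
  Matrix.abs_det_sub_det_le hh (fun _ _ => abs_heatK_le_one ht _ _)
    (fun _ _ => abs_heatK_le_one ht _ _) fun i j =>
      (abs_heatK_sub_heatK_le_abs_sub ht _ _ _).trans <| by
        rw [sub_add_cancel_left, abs_neg]; exact hs i

theorem det_average_bound_general (k : ℕ) (t : ℝ)
    (ht : (Real.sqrt (2 * Real.pi * Real.exp 1))⁻¹ ≤ t) (h : ℝ) (hh : 0 < h)
    (a b : Fin (k + 1) → ℝ) :
    |Matrix.det (Matrix.of fun i j : Fin (k + 1) => heatK t (a i) (b j)) -
        (2 * h) ^ (-((k : ℤ) + 1)) *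
          ∫ s in (Set.Icc (fun _ => -h) (fun _ => h) : Set (Fin (k + 1) → ℝ)),
            Matrix.det (Matrix.of fun i j : Fin (k + 1) => heatK t (a i + s i) (b j))| ≤
      2 * h * ((k : ℝ) + 1) ^ 2 * (Nat.factorial k : ℝ) := by
  set cube : Set (Fin (k + 1) → ℝ) := Set.Icc (fun _ => -h) (fun _ => h)
  have ht' : 1 ≤ √(2 * π * exp 1) * t := (inv_le_iff_one_le_mul₀' (by positivity)).1 ht
  have hvol : volume.real cube = (2 * h) ^ (k + 1) := by
    rw [measureReal_def, Real.volume_Icc_pi_toReal fun _ => by simp only; linarith]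
    simp [two_mul]
  have hfin : volume cube ≠ ⊤ := isCompact_Icc.measure_lt_top.ne
  have hpos : volume cube ≠ 0 := (measureReal_ne_zero_iff hfin).1 (by rw [hvol]; positivity)
  have hcont : Continuous fun s : Fin (k + 1) → ℝ =>
      (Matrix.of fun i j => heatK t (a i + s i) (b j)).det :=
    Continuous.matrix_det <| continuous_matrix fun i j => by unfold heatK; fun_prop
  have havg : (2 * h) ^ (-((k : ℤ) + 1)) *
      ∫ s in cube, (Matrix.of fun i j => heatK t (a i + s i) (b j)).det =
      ⨍ s in cube, (Matrix.of fun i j => heatK t (a i + s i) (b j)).det := by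
    rw [setAverage_eq, hvol, smul_eq_mul, ← zpow_natCast, ← zpow_neg]
    norm_cast
  have hshift (s) (hs : s ∈ cube) :
      ‖(Matrix.of fun i j => heatK t (a i) (b j)).det -
          (Matrix.of fun i j => heatK t (a i + s i) (b j)).det‖ ≤
        (Fintype.card (Fin (k + 1))).factorial * (Fintype.card (Fin (k + 1)) * h) :=
    abs_det_heatK_sub_det_heatK_shift_le ht' hh.le a b s fun i => abs_le.2 ⟨hs.1 i, hs.2 i⟩
  rw [havg, ← Real.norm_eq_abs]
  refine (norm_sub_setAverage_le measurableSet_Icc hpos hfin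
    (hcont.continuousOn.integrableOn_compact isCompact_Icc) hshift).trans ?_
  rw [Fintype.card_fin, Nat.factorial_succ]
  push_cast
  linarith [(by positivity : 0 ≤ ((k : ℝ) + 1) ^ 2 * k.factorial * h)]

theorem det_average_bound (k : ℕ) (hk : 1 ≤ k) (t : ℝ)
    (ht : (Real.sqrt (2 * Real.pi * Real.exp 1))⁻¹ ≤ t) (h : ℝ) (hh : 0 < h)
    (a b : Fin (k + 1) → ℝ) :
    |Matrix.det (Matrix.of fun i j : Fin (k + 1) => heatK t (a i) (b j)) -
        (2 * h) ^ (-((k : ℤ) + 1)) *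
          ∫ s in (Set.Icc (fun _ => -h) (fun _ => h) : Set (Fin (k + 1) → ℝ)),
            Matrix.det (Matrix.of fun i j : Fin (k + 1) => heatK t (a i + s i) (b j))| ≤
      2 * h * ((k : ℝ) + 1) ^ 2 * (Nat.factorial k : ℝ) :=
  det_average_bound_general k t ht h hh a b
end

section
/- For every integer k ≥ 0 and all real numbers x_0 < x_1 < ⋯ < x_k and y_0 < y_1 < ⋯ < y_k, det((p_1(x_i, y_j))_{i,j=0}^{k}) ≤ ∏_{i=0}^{k} (2π)^{−1/2} e^{−(x_i − y_i)²/2}; in particular this determinant is at most 1. -/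
/-!
The matrix `exp (x i * y j)` with increasing `x`, `y` is strictly totally positive. By induction
on the size: as a function of the first point `s = x 0`, its determinant is an exponential sum
whose coefficient of the smallest exponent is a smaller such determinant, hence positive, so the
sum is positive near `-∞`; an exponential sum with `n` terms has at most `n - 1` zeros (Rolle),
so the determinant does not vanish while the points stay increasing, and it stays positive up
to `x 0`. The heat kernel matrix is this matrix with rows and columns scaled by positive factors.
For a strictly totally positive matrix the Desnanot–Jacobi identity on the last two rows and
columns, whose cross term is positive, gives `det A ≤ A n n * det A[<n]`; iterating,
`det A ≤ ∏ A i i`, and each diagonal entry `p_1(x_i, y_i)` is at most `(2π)^{-1/2} ≤ 1`.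
-/

open Real Filter Topology Finset

theorem exists_strictMono_deriv_eq_zero {m : ℕ} {f f' : ℝ → ℝ}
    (hf : ∀ t, HasDerivAt f (f' t) t) {s : Fin (m + 1) → ℝ} (hs : StrictMono s)
    (hzero : ∀ i, f (s i) = 0) : ∃ t : Fin m → ℝ, StrictMono t ∧ ∀ i, f' (t i) = 0 := by
  have hrolle : ∀ i : Fin m, ∃ t ∈ Set.Ioo (s i.castSucc) (s i.succ), f' t = 0 := fun i =>
    exists_hasDerivAt_eq_zero (hs i.castSucc_lt_succ)
      (continuous_iff_continuousAt.2 fun t => (hf t).continuousAt).continuousOn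
      (by rw [hzero, hzero]) fun t _ => hf t
  choose t ht hf't using hrolle
  refine ⟨t, fun a b hab => ?_, hf't⟩
  calc t a < s a.succ := (ht a).2
    _ ≤ s b.castSucc := hs.monotone (Fin.succ_le_castSucc_iff.2 hab)
    _ < t b := (ht b).1

theorem eq_zero_of_forall_sum_mul_exp_eq_zero :
    ∀ {m : ℕ} {y s c : Fin m → ℝ}, StrictMono y → StrictMono s →
      (∀ i, ∑ j, c j * exp (s i * y j) = 0) → c = 0
  | 0, _, _, c, _, _, _ => Subsingleton.elim c 0
  | m + 1, y, s, c, hy, hs, hzero => by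
    set z : Fin (m + 1) → ℝ := fun j => y j - y 0 with hz_def
    have hderiv : ∀ t, HasDerivAt (fun t => ∑ j, c j * exp (t * z j))
        (∑ j, c j * z j * exp (t * z j)) t := fun t =>
      HasDerivAt.fun_sum fun j _ => by
        simpa [mul_comm, mul_left_comm, mul_assoc] using
          ((hasDerivAt_mul_const (z j)).exp.const_mul (c j))
    -- After the shift the `j = 0` term is constant, so the derivative has one term fewer.
    have hshift : ∀ i, ∑ j, c j * exp (s i * z j) = 0 := by
      intro i
      have : ∑ j, c j * exp (s i * z j) = exp (-(s i * y 0)) * ∑ j, c j * exp (s i * y j) := by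
        rw [mul_sum]
        refine sum_congr rfl fun j _ => ?_
        rw [mul_left_comm, ← exp_add, hz_def]
        ring_nf
      rw [this, hzero, mul_zero]
    obtain ⟨t, ht, hderiv_zero⟩ := exists_strictMono_deriv_eq_zero hderiv hs hshift
    have hz : StrictMono fun j : Fin m => z j.succ := fun a b hab =>
      sub_lt_sub_right (hy (Fin.succ_lt_succ_iff.2 hab)) _
    have hcz := eq_zero_of_forall_sum_mul_exp_eq_zero hz ht (c := fun j => c j.succ * z j.succ)
      fun i => by simpa [Fin.sum_univ_succ, hz_def] using hderiv_zero i
    have hsucc : ∀ j : Fin m, c j.succ = 0 := fun j =>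
      (mul_eq_zero.1 (congrFun hcz j)).resolve_right (sub_ne_zero.2 (hy (Fin.succ_pos j)).ne')
    have h0 : c 0 = 0 := by simpa [Fin.sum_univ_succ, hsucc] using hzero 0
    funext j
    cases j using Fin.cases with
    | zero => exact h0
    | succ j => exact hsucc j

noncomputable def expKernel {ι κ : Type*} (x : ι → ℝ) (y : κ → ℝ) : Matrix ι κ ℝ :=
  Matrix.of fun i j => exp (x i * y j)

theorem det_expKernel_ne_zero {n : ℕ} {x y : Fin n → ℝ} (hx : StrictMono x)
    (hy : StrictMono y) : (expKernel x y).det ≠ 0 := by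
  rw [Ne, ← Matrix.exists_mulVec_eq_zero_iff]
  rintro ⟨c, hc, hKc⟩
  refine hc (eq_zero_of_forall_sum_mul_exp_eq_zero hy hx fun i => ?_)
  simpa [expKernel, Matrix.mulVec, dotProduct, mul_comm] using congrFun hKc i

theorem det_expKernel_cons {n : ℕ} (s : ℝ) (x : Fin n → ℝ) (y : Fin (n + 1) → ℝ) :
    (expKernel (Fin.cons s x) y).det =
      ∑ j : Fin (n + 1),
        (-1) ^ (j : ℕ) * (expKernel x (y ∘ j.succAbove)).det * exp (s * y j) := by
  rw [Matrix.det_succ_row_zero]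
  refine sum_congr rfl fun j _ => ?_
  rw [mul_right_comm]
  rfl

theorem eventually_pos_sum_mul_exp_atBot {n : ℕ} {y c : Fin (n + 1) → ℝ} (hy : StrictMono y)
    (hc : 0 < c 0) : ∀ᶠ s in atBot, 0 < ∑ j, c j * exp (s * y j) := by
  have hlim : Tendsto (fun s => ∑ j, c j * exp (s * (y j - y 0))) atBot (𝓝 (c 0)) := by
    have hterm : ∀ j : Fin n,
        Tendsto (fun s => c j.succ * exp (s * (y j.succ - y 0))) atBot (𝓝 0) := by
      intro j
      simpa using (tendsto_exp_atBot.comp (tendsto_id.atBot_mul_const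
        (sub_pos.2 (hy (Fin.succ_pos j))))).const_mul (c j.succ)
    simpa [Fin.sum_univ_succ] using tendsto_const_nhds.add (tendsto_finsetSum _ fun j _ => hterm j)
  filter_upwards [hlim.eventually (eventually_gt_nhds hc)] with s hs
  have hfactor :
      ∑ j, c j * exp (s * y j) = exp (s * y 0) * ∑ j, c j * exp (s * (y j - y 0)) := by
    rw [mul_sum]
    refine sum_congr rfl fun j _ => ?_
    rw [mul_left_comm, ← exp_add]
    ring_nf
  rw [hfactor]
  exact mul_pos (exp_pos _) hs

theorem det_expKernel_pos :
    ∀ {n : ℕ} {x y : Fin n → ℝ}, StrictMono x → StrictMono y → 0 < (expKernel x y).det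
  | 0, _, _, _, _ => by simp [Matrix.det_isEmpty]
  | n + 1, x, y, hx, hy => by
    set c : Fin (n + 1) → ℝ := fun j =>
      (-1) ^ (j : ℕ) * (expKernel (Fin.tail x) (y ∘ j.succAbove)).det
    have htail : StrictMono (Fin.tail x) := hx.comp Fin.strictMono_succ
    have hc : 0 < c 0 := by
      simpa [c] using det_expKernel_pos htail (hy.comp Fin.strictMono_succ)
    have hne : ∀ s ≤ x 0, ∑ j, c j * exp (s * y j) ≠ 0 := fun s hs => by
      rw [← det_expKernel_cons]
      exact det_expKernel_ne_zero
        (Fin.strictMono_cons.2 ⟨fun j => hs.trans_lt (hx (Fin.succ_pos j)), htail⟩) hy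
    obtain ⟨s₀, hs₀, hpos⟩ :=
      ((eventually_le_atBot (x 0)).and (eventually_pos_sum_mul_exp_atBot hy hc)).exists
    have hx0 : 0 < ∑ j, c j * exp (x 0 * y j) := by
      by_contra! hle
      have hcont : Continuous fun s => ∑ j, c j * exp (s * y j) := by fun_prop
      obtain ⟨z, hz, hz0⟩ := intermediate_value_Icc' hs₀ hcont.continuousOn ⟨hle, hpos.le⟩
      exact hne z hz.2 hz0
    rwa [← det_expKernel_cons, Fin.cons_self_tail] at hx0

namespace Matrix

section DesnanotJacobi

variable {R : Type*} [CommRing R] {ι : Type*} [Fintype ι] [DecidableEq ι]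

theorem det_submatrix_sumMap_eq_det_mul_schur (A : Matrix (ι ⊕ Fin 2) (ι ⊕ Fin 2) R)
    [Invertible (A.submatrix Sum.inl Sum.inl)] (α β : Fin 2) :
    (A.submatrix (Sum.map id fun _ : Fin 1 => α) (Sum.map id fun _ : Fin 1 => β)).det =
      (A.submatrix Sum.inl Sum.inl).det *
        (A.submatrix Sum.inr Sum.inr - A.submatrix Sum.inr Sum.inl *
          ⅟(A.submatrix Sum.inl Sum.inl) * A.submatrix Sum.inl Sum.inr) α β := by
  rw [← fromBlocks_toBlocks (A.submatrix _ _)]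
  exact (det_fromBlocks₁₁ (A.submatrix Sum.inl Sum.inl) _ _ _).trans
    (congrArg (_ * ·) (det_unique _))

theorem desnanot_jacobi_sum (A : Matrix (ι ⊕ Fin 2) (ι ⊕ Fin 2) R)
    (hA : IsUnit (A.submatrix Sum.inl Sum.inl).det) :
    A.det * (A.submatrix Sum.inl Sum.inl).det =
      (A.submatrix (Sum.map id fun _ : Fin 1 => 0) (Sum.map id fun _ : Fin 1 => 0)).det *
        (A.submatrix (Sum.map id fun _ : Fin 1 => 1) (Sum.map id fun _ : Fin 1 => 1)).det -
      (A.submatrix (Sum.map id fun _ : Fin 1 => 0) (Sum.map id fun _ : Fin 1 => 1)).det *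
        (A.submatrix (Sum.map id fun _ : Fin 1 => 1) (Sum.map id fun _ : Fin 1 => 0)).det := by
  let := invertibleOfIsUnitDet _ hA
  have hdet : A.det = (A.submatrix Sum.inl Sum.inl).det * (A.submatrix Sum.inr Sum.inr -
      A.submatrix Sum.inr Sum.inl * ⅟(A.submatrix Sum.inl Sum.inl) *
        A.submatrix Sum.inl Sum.inr).det := by
    conv_lhs => rw [← fromBlocks_toBlocks A]
    exact det_fromBlocks₁₁ (A.submatrix Sum.inl Sum.inl) _ _ _
  rw [hdet, det_fin_two]
  simp only [det_submatrix_sumMap_eq_det_mul_schur]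
  ring

-- `(Fin.last n).castSucc.succAbove` skips the penultimate index `n`.
theorem desnanot_jacobi {n : ℕ} (A : Matrix (Fin (n + 2)) (Fin (n + 2)) R)
    (hA : IsUnit
      (A.submatrix (Fin.castSucc ∘ Fin.castSucc) (Fin.castSucc ∘ Fin.castSucc)).det) :
    A.det * (A.submatrix (Fin.castSucc ∘ Fin.castSucc) (Fin.castSucc ∘ Fin.castSucc)).det =
      (A.submatrix Fin.castSucc Fin.castSucc).det *
          (A.submatrix (Fin.last n).castSucc.succAbove (Fin.last n).castSucc.succAbove).det -
        (A.submatrix Fin.castSucc (Fin.last n).castSucc.succAbove).det *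
          (A.submatrix (Fin.last n).castSucc.succAbove Fin.castSucc).det := by
  have hsub : ∀ {f g : Fin (n + 1) → Fin (n + 2)} {α β : Fin 2},
      f ∘ finSumFinEquiv = finSumFinEquiv ∘ Sum.map id (fun _ : Fin 1 => α) →
      g ∘ finSumFinEquiv = finSumFinEquiv ∘ Sum.map id (fun _ : Fin 1 => β) →
      (A.submatrix f g).det = ((A.submatrix finSumFinEquiv finSumFinEquiv).submatrix
        (Sum.map id fun _ : Fin 1 => α) (Sum.map id fun _ : Fin 1 => β)).det := by
    intro f g α β hf hg
    rw [← det_submatrix_equiv_self finSumFinEquiv, submatrix_submatrix, submatrix_submatrix, hf,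
      hg]
  have hcastSucc : Fin.castSucc ∘ (finSumFinEquiv : Fin n ⊕ Fin 1 ≃ Fin (n + 1)) =
      finSumFinEquiv ∘ Sum.map id (fun _ : Fin 1 => (0 : Fin 2)) := by
    funext i
    rcases i with i | i <;> ext <;> simp
  have hskip : (Fin.last n).castSucc.succAbove ∘ finSumFinEquiv =
      finSumFinEquiv ∘ Sum.map id (fun _ : Fin 1 => (1 : Fin 2)) := by
    funext i
    rcases i with i | i <;> ext <;> simp [Fin.succAbove, Fin.lt_def]
  have := desnanot_jacobi_sum (A.submatrix finSumFinEquiv finSumFinEquiv) hA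
  rwa [det_submatrix_equiv_self, ← hsub hcastSucc hcastSucc, ← hsub hskip hskip,
    ← hsub hcastSucc hskip, ← hsub hskip hcastSucc] at this

end DesnanotJacobi

-- Strict total positivity, in Karlin's terminology.
def IsTotallyPositive {R m n : Type*} [CommRing R] [PartialOrder R] [Preorder m] [Preorder n]
    (A : Matrix m n R) : Prop :=
  ∀ (k : ℕ) (r : Fin k → m) (c : Fin k → n), StrictMono r → StrictMono c →
    0 < (A.submatrix r c).det

namespace IsTotallyPositive

variable {R : Type*} [CommRing R] [PartialOrder R]

theorem submatrix {m n m' n' : Type*} [Preorder m] [Preorder n] [Preorder m'] [Preorder n']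
    {A : Matrix m n R} (hA : A.IsTotallyPositive) {r : m' → m} {c : n' → n}
    (hr : StrictMono r) (hc : StrictMono c) : (A.submatrix r c).IsTotallyPositive :=
  fun _ _ _ hr' hc' => hA _ _ _ (hr.comp hr') (hc.comp hc')

theorem apply_pos {m n : Type*} [Preorder m] [Preorder n] {A : Matrix m n R}
    (hA : A.IsTotallyPositive) (i : m) (j : n) : 0 < A i j := by
  simpa using hA 1 (fun _ => i) (fun _ => j) (Subsingleton.strictMono _) (Subsingleton.strictMono _)

theorem mul_rows_cols [IsStrictOrderedRing R] {m n : Type*} [Preorder m] [Preorder n]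
    {A : Matrix m n R} (hA : A.IsTotallyPositive) {u : m → R} {v : n → R} (hu : ∀ i, 0 < u i)
    (hv : ∀ j, 0 < v j) : (of fun i j => u i * A i j * v j).IsTotallyPositive := by
  intro k r c hr hc
  have : (of fun i j => u i * A i j * v j).submatrix r c =
      of fun i j => (v ∘ c) j * (of fun i j => (u ∘ r) i * A.submatrix r c i j) i j := by
    ext i j
    simp only [submatrix_apply, of_apply, Function.comp_apply]
    ring
  rw [this, det_mul_row, det_mul_column]
  exact mul_pos (Finset.prod_pos fun j _ => hv _)
    (mul_pos (Finset.prod_pos fun i _ => hu _) (hA _ _ _ hr hc))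

section LinearOrderedField

variable {K : Type*} [Field K] [LinearOrder K] [IsStrictOrderedRing K]

theorem det_le_mul_det_submatrix_castSucc :
    ∀ {n : ℕ} {A : Matrix (Fin (n + 1)) (Fin (n + 1)) K}, A.IsTotallyPositive →
      A.det ≤ A (Fin.last n) (Fin.last n) * (A.submatrix Fin.castSucc Fin.castSucc).det
  | 0, A, _ => by simp [Fin.last]
  | n + 1, A, hA => by
    set M := A.submatrix (Fin.castSucc ∘ Fin.castSucc) (Fin.castSucc ∘ Fin.castSucc)
    set τ : Fin (n + 1) → Fin (n + 2) := (Fin.last n).castSucc.succAbove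
    have hτ : StrictMono τ := Fin.strictMono_succAbove _
    have hcs : StrictMono (Fin.castSucc : Fin (n + 1) → Fin (n + 2)) := Fin.strictMono_castSucc
    have hcs₂ : StrictMono (Fin.castSucc ∘ Fin.castSucc : Fin n → Fin (n + 2)) :=
      hcs.comp Fin.strictMono_castSucc
    have hM : 0 < M.det := hA _ _ _ hcs₂ hcs₂
    have hcross : 0 < (A.submatrix Fin.castSucc τ).det * (A.submatrix τ Fin.castSucc).det :=
      mul_pos (hA _ _ _ hcs hτ) (hA _ _ _ hτ hcs)
    have hτ_castSucc : τ ∘ Fin.castSucc = Fin.castSucc ∘ Fin.castSucc := funext fun i =>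
      Fin.succAbove_of_castSucc_lt _ _ (Fin.castSucc_lt_castSucc_iff.2 (Fin.castSucc_lt_last i))
    -- `A.submatrix τ τ` has leading minor `M` and corner `A (last) (last)`.
    have hττ : (A.submatrix τ τ).det ≤ A (Fin.last (n + 1)) (Fin.last (n + 1)) * M.det := by
      simpa [τ, M, hτ_castSucc] using det_le_mul_det_submatrix_castSucc (hA.submatrix hτ hτ)
    refine le_of_mul_le_mul_right ?_ hM
    calc A.det * M.det
        = (A.submatrix Fin.castSucc Fin.castSucc).det * (A.submatrix τ τ).det -
            (A.submatrix Fin.castSucc τ).det * (A.submatrix τ Fin.castSucc).det :=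
          desnanot_jacobi A hM.ne'.isUnit
      _ ≤ (A.submatrix Fin.castSucc Fin.castSucc).det *
            (A (Fin.last (n + 1)) (Fin.last (n + 1)) * M.det) := by
          nlinarith [hA _ _ _ hcs hcs]
      _ = _ := by ring

theorem det_le_prod_diag :
    ∀ {n : ℕ} {A : Matrix (Fin n) (Fin n) K}, A.IsTotallyPositive → A.det ≤ ∏ i, A i i
  | 0, _, _ => by simp
  | n + 1, A, hA => by
    rw [Fin.prod_univ_castSucc, mul_comm]
    exact (det_le_mul_det_submatrix_castSucc hA).trans (mul_le_mul_of_nonneg_left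
      (det_le_prod_diag (hA.submatrix Fin.strictMono_castSucc Fin.strictMono_castSucc))
      (hA.apply_pos _ _).le)

end LinearOrderedField

end IsTotallyPositive

end Matrix

theorem isTotallyPositive_expKernel {ι κ : Type*} [Preorder ι] [Preorder κ] {x : ι → ℝ}
    {y : κ → ℝ} (hx : StrictMono x) (hy : StrictMono y) : (expKernel x y).IsTotallyPositive :=
  fun _ _ _ hr hc => det_expKernel_pos (hx.comp hr) (hy.comp hc)

theorem isTotallyPositive_heatK {ι κ : Type*} [Preorder ι] [Preorder κ] {t : ℝ} (ht : 0 < t)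
    {x : ι → ℝ} {y : κ → ℝ} (hx : StrictMono x) (hy : StrictMono y) :
    (Matrix.of fun i j => heatK t (x i) (y j)).IsTotallyPositive := by
  have hxt : StrictMono fun i => x i / t := fun a b hab => div_lt_div_of_pos_right (hx hab) ht
  convert (isTotallyPositive_expKernel hxt hy).mul_rows_cols
    (u := fun i => (√(2 * π * t))⁻¹ * exp (-x i ^ 2 / (2 * t)))
    (v := fun j => exp (-y j ^ 2 / (2 * t))) (fun i => by positivity) (fun j => exp_pos _) using 1
  ext i j
  simp only [Matrix.of_apply, expKernel, heatK, mul_assoc, ← exp_add]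
  congr 2
  field_simp
  ring

theorem heatK_one_le_one (a b : ℝ) : heatK 1 a b ≤ 1 := by
  have hsqrt : 1 ≤ √(2 * π * 1) := by
    rw [mul_one, Real.one_le_sqrt]
    linarith [pi_gt_three]
  exact mul_le_one₀ (inv_le_one_of_one_le₀ hsqrt) (exp_pos _).le
    (exp_le_one_iff.2 (by linarith [sq_nonneg (a - b)]))

theorem det_heat_kernel_upper_bound (k : ℕ) (x y : Fin (k + 1) → ℝ)
    (hx : StrictMono x) (hy : StrictMono y) :
    Matrix.det (Matrix.of fun i j : Fin (k + 1) => heatK 1 (x i) (y j)) ≤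
        ∏ i : Fin (k + 1), (Real.sqrt (2 * Real.pi))⁻¹ * Real.exp (-(x i - y i) ^ 2 / 2) ∧
      Matrix.det (Matrix.of fun i j : Fin (k + 1) => heatK 1 (x i) (y j)) ≤ 1 := by
  have hTP := isTotallyPositive_heatK one_pos hx hy
  have hdet := hTP.det_le_prod_diag
  refine ⟨hdet.trans_eq (by simp only [Matrix.of_apply, heatK, mul_one]), hdet.trans ?_⟩
  exact Finset.prod_le_one (fun i _ => (hTP.apply_pos i i).le) fun i _ => heatK_one_le_one _ _
end

section
/- For every integer k ≥ 1 and every (y_0, …, y_k) ∈ ℝ^{k+1}, det((p_1(x_i, y_j))_{i,j=0}^{k}) = (2π)^{−(k+1)/2} · e^{−(k+1)(k+2)/(6k)} · ( ∏_{j=0}^{k} e^{−y_j²/2 − y_j} ) · ∏_{0 ≤ i < j ≤ k} ( e^{2 y_j / k} − e^{2 y_i / k} ). -/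
/-!
Expanding the square, `p_1(x_i, y_j) = (2π)^{-1/2} e^{-x_i²/2} · e^{-y_j²/2} · e^{x_i y_j}`, and since
`x_i = -1 + 2i/k` the last factor is `e^{-y_j} (e^{2 y_j / k})^i`. So the matrix is a Vandermonde
matrix in the nodes `e^{2 y_j / k}` with rows and columns rescaled; the constant comes from
`∑ x_i² = (k+1)(k+2)/(3k)`.
-/

open Matrix Finset Real

theorem Matrix.det_of_mul_mul_pow {R : Type*} [CommRing R] {n : ℕ} (c d v : Fin n → R) :
    det (of fun i j => c i * d j * v j ^ (i : ℕ)) =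
      (∏ i, c i) * (∏ j, d j) * ∏ i, ∏ j ∈ Ioi i, (v j - v i) := by
  have hfactor : (of fun i j => c i * d j * v j ^ (i : ℕ)) =
      of fun i j => c i * (of fun i j => d j * (vandermonde v)ᵀ i j) i j := by
    ext i j
    simp [mul_assoc]
  rw [hfactor, det_mul_column, det_mul_row, det_transpose, det_vandermonde, mul_assoc]

theorem heatK_eq_mul_exp_mul (t a b : ℝ) :
    heatK t a b = (√(2 * π * t))⁻¹ * exp (-a ^ 2 / (2 * t)) * exp (-b ^ 2 / (2 * t)) *
      exp (a * b / t) := by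
  simp only [heatK, mul_assoc, ← exp_add]
  ring_nf

theorem exp_xPt_mul {k : ℕ} (hk : k ≠ 0) (i : Fin (k + 1)) (b : ℝ) :
    exp (xPt k i * b) = exp (-b) * exp (2 * b / k) ^ (i : ℕ) := by
  have hk' : (k : ℝ) ≠ 0 := Nat.cast_ne_zero.mpr hk
  rw [← exp_nat_mul, ← exp_add, xPt]
  congr 1
  field_simp
  ring

theorem sum_range_two_mul_sub_sq (n m : ℕ) :
    ∑ i ∈ range m, (2 * (i : ℝ) - n) ^ 2 =
      (m : ℝ) * (2 * (m - 1) * (2 * m - 1) / 3 - 2 * n * (m - 1) + n ^ 2) := by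
  induction m with
  | zero => simp
  | succ m ih => rw [sum_range_succ, ih]; push_cast; ring

theorem sum_xPt_sq {k : ℕ} (hk : k ≠ 0) :
    ∑ i : Fin (k + 1), xPt k i ^ 2 = (k + 1) * (k + 2) / (3 * k) := by
  have hk' : (k : ℝ) ≠ 0 := Nat.cast_ne_zero.mpr hk
  simp only [xPt, div_pow, ← sum_div]
  rw [Fin.sum_univ_eq_sum_range (fun i => (2 * (i : ℝ) - k) ^ 2), sum_range_two_mul_sub_sq]
  field_simp
  push_cast
  ring

theorem inv_sqrt_pow {a : ℝ} (ha : 0 ≤ a) (n : ℕ) : (√a)⁻¹ ^ n = a ^ (-((n : ℝ) / 2)) := by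
  rw [sqrt_eq_rpow, ← rpow_neg ha, ← rpow_mul_natCast ha]
  ring_nf

theorem prod_inv_sqrt_mul_exp_xPt_sq {k : ℕ} (hk : k ≠ 0) :
    ∏ i : Fin (k + 1), (√(2 * π))⁻¹ * exp (-xPt k i ^ 2 / 2) =
      (2 * π) ^ (-(((k : ℝ) + 1) / 2)) * exp (-(((k : ℝ) + 1) * ((k : ℝ) + 2)) / (6 * k)) := by
  rw [prod_mul_distrib, prod_const, card_univ, Fintype.card_fin, inv_sqrt_pow (by positivity),
    ← exp_sum, ← sum_div, sum_neg_distrib, sum_xPt_sq hk]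
  push_cast
  ring_nf

theorem det_heat_kernel_vandermonde (k : ℕ) (hk : 1 ≤ k) (y : Fin (k + 1) → ℝ) :
    Matrix.det (Matrix.of fun i j : Fin (k + 1) => heatK 1 (xPt k i) (y j)) =
      (2 * Real.pi) ^ (-(((k : ℝ) + 1) / 2)) *
        Real.exp (-(((k : ℝ) + 1) * ((k : ℝ) + 2)) / (6 * k)) *
        (∏ j : Fin (k + 1), Real.exp (-(y j) ^ 2 / 2 - y j)) *
        ∏ i : Fin (k + 1), ∏ j ∈ Finset.Ioi i,
          (Real.exp (2 * y j / k) - Real.exp (2 * y i / k)) := by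
  have hk0 : k ≠ 0 := by omega
  have hentries : (of fun i j : Fin (k + 1) => heatK 1 (xPt k i) (y j)) =
      of fun i j => (√(2 * π))⁻¹ * exp (-xPt k i ^ 2 / 2) * exp (-y j ^ 2 / 2 - y j) *
        exp (2 * y j / k) ^ (i : ℕ) := by
    ext i j
    rw [of_apply, of_apply, heatK_eq_mul_exp_mul, div_one, exp_xPt_mul hk0, sub_eq_add_neg,
      exp_add]
    ring_nf
  rw [hentries, det_of_mul_mul_pow, prod_inv_sqrt_mul_exp_xPt_sq hk0]
end

section
/- Let n ≥ 1 be an integer and let b_1 > b_2 > ⋯ > b_n be real numbers. Then, as (x_1, …, x_n) and (y_1, …, y_n) tend to (0, …, 0) along tuples satisfying x_1 > x_2 > ⋯ > x_n and y_1 > y_2 > ⋯ > y_n, the quotient det((p_1(x_i, b_j))_{i,j=1}^{n}) · det((p_1(b_i, y_j))_{i,j=1}^{n}) / det((p_2(x_i, y_j))_{i,j=1}^{n}) converges to (2^{n(n−1)/2} / (π^{n/2} ∏_{j=1}^{n−1} j!)) · ∏_{1 ≤ i < j ≤ n} (b_i − b_j)² · ∏_{j=1}^{n} e^{−b_j²},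 which is the eigenvalue density of the n×n Gaussian unitary ensemble evaluated at (b_1, …, b_n). -/
open Filter

/-!
Since `p_t(a, c) = (2πt)^{-1/2} e^{-a²/2t} e^{-c²/2t} e^{ac/t}`, Gaussian factors come out of
each determinant and leave `det (e^{x_i c_j / t})`. Expanding `s ↦ e^{c s}` in the Newton basis
`∏_{l<k} (s - x_l)` of the nodes `x` factors
`det (e^{x_i c_j}) = det N(x) · det ([x_0 … x_k] e^{c_j ·})`, and expanding once more in `y` gives
`det (e^{x_i y_j / 2}) = det N(x) · det T(x, y) · det N(y)`, where `T` holds the divided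
differences of `(s, u) ↦ e^{su/2}` in both variables. For distinct nodes the factor
`det N(x) det N(y) ≠ 0` cancels from the ratio. As the nodes coalesce at `0`, divided differences
become Taylor coefficients: `[x_0 … x_k] e^{c ·} → c^k / k!` and `T → diag (2^{-k} / k!)`, so
the limit is a squared Vandermonde determinant in `b` times an explicit constant.
-/

open Finset Topology Matrix

section DividedDifferences

variable {R : Type*} [CommRing R]

/-- `divDiffPow x k p` is the divided difference `[x 0, …, x k] t ^ p`. The recursion in `p` is
the Leibniz rule `[x 0, …, x k] (t * g) = x k • [x 0, …, x k] g + [x 0, …, x (k-1)] g`. -/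
def divDiffPow (x : ℕ → R) : ℕ → ℕ → R
  | 0, 0 => 1
  | _ + 1, 0 => 0
  | 0, p + 1 => x 0 * divDiffPow x 0 p
  | k + 1, p + 1 => divDiffPow x k p + x (k + 1) * divDiffPow x (k + 1) p

theorem divDiffPow_zero_right (x : ℕ → R) (k : ℕ) :
    divDiffPow x k 0 = if k = 0 then 1 else 0 := by
  cases k <;> simp [divDiffPow]

theorem pow_eq_sum_divDiffPow_mul_prod (x : ℕ → R) {n i : ℕ} (hi : i < n) (p : ℕ) :
    x i ^ p = ∑ k ∈ range n, divDiffPow x k p * ∏ l ∈ range k, (x i - x l) := by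
  obtain ⟨m, rfl⟩ : ∃ m, n = m + 1 := ⟨n - 1, by omega⟩
  induction p with
  | zero => simp [divDiffPow_zero_right]
  | succ p ih =>
    have hvanish : ∏ l ∈ range (m + 1), (x i - x l) = 0 :=
      prod_eq_zero (mem_range.2 hi) (sub_self _)
    calc x i ^ (p + 1)
        = ∑ k ∈ range (m + 1), divDiffPow x k p * ((x i - x k) * ∏ l ∈ range k, (x i - x l))
          + ∑ k ∈ range (m + 1), x k * divDiffPow x k p * ∏ l ∈ range k, (x i - x l) := by
          rw [pow_succ, ih, sum_mul, ← sum_add_distrib]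
          exact sum_congr rfl fun k _ => by ring
      _ = ∑ k ∈ range (m + 1), divDiffPow x k (p + 1) * ∏ l ∈ range k, (x i - x l) := by
          simp_rw [mul_comm (x i - _), ← prod_range_succ]
          rw [sum_range_succ, hvanish, sum_range_succ' _ m, sum_range_succ' (fun k => _ * _)]
          simp only [divDiffPow, sum_add_distrib, add_mul, range_zero, prod_empty]
          ring

theorem divDiffPow_zero (k p : ℕ) : divDiffPow (0 : ℕ → R) k p = if k = p then 1 else 0 := by
  induction p generalizing k with
  | zero => simp [divDiffPow_zero_right]
  | succ p ih => cases k <;> simp [divDiffPow, ih]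

theorem continuous_divDiffPow [TopologicalSpace R] [IsTopologicalRing R] (k p : ℕ) :
    Continuous fun x : ℕ → R => divDiffPow x k p := by
  induction p generalizing k with
  | zero => simp only [divDiffPow_zero_right]; exact continuous_const
  | succ p ih =>
    cases k with
    | zero => exact (continuous_apply 0).mul (ih 0)
    | succ k => exact (ih k).add ((continuous_apply _).mul (ih _))

end DividedDifferences

theorem abs_divDiffPow_le {x : ℕ → ℝ} {r : ℝ} (hx : ∀ l, |x l| ≤ r) (k p : ℕ) :
    |divDiffPow x k p| ≤ (r + 1) ^ p := by
  have hr : 0 ≤ r := (abs_nonneg _).trans (hx 0)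
  induction p generalizing k with
  | zero => cases k <;> simp [divDiffPow]
  | succ p ih =>
    cases k with
    | zero =>
      calc |x 0 * divDiffPow x 0 p| ≤ r * (r + 1) ^ p := by
            rw [abs_mul]; exact mul_le_mul (hx 0) (ih 0) (abs_nonneg _) hr
        _ ≤ (r + 1) ^ (p + 1) := by rw [pow_succ']; gcongr; linarith
    | succ k =>
      calc |divDiffPow x k p + x (k + 1) * divDiffPow x (k + 1) p|
          ≤ (r + 1) ^ p + r * (r + 1) ^ p := by
            refine (abs_add_le _ _).trans (add_le_add (ih k) ?_)
            rw [abs_mul]; exact mul_le_mul (hx _) (ih _) (abs_nonneg _) hr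
        _ = (r + 1) ^ (p + 1) := by ring

theorem summable_mul_divDiffPow {α : ℕ → ℝ} {x : ℕ → ℝ} {r : ℝ} (hx : ∀ l, |x l| ≤ r)
    (hα : Summable fun p => |α p| * (r + 1) ^ p) (k : ℕ) :
    Summable fun p => α p * divDiffPow x k p :=
  hα.of_norm_bounded fun p => by
    rw [Real.norm_eq_abs, abs_mul]; gcongr; exact abs_divDiffPow_le hx k p

theorem tsum_mul_pow_eq_sum {α : ℕ → ℝ} {x : ℕ → ℝ} {r : ℝ} (hx : ∀ l, |x l| ≤ r)
    (hα : Summable fun p => |α p| * (r + 1) ^ p) {n i : ℕ} (hi : i < n) :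
    ∑' p, α p * x i ^ p
      = ∑ k ∈ range n, (∑' p, α p * divDiffPow x k p) * ∏ l ∈ range k, (x i - x l) := by
  simp_rw [pow_eq_sum_divDiffPow_mul_prod x hi, mul_sum, ← mul_assoc]
  rw [Summable.tsum_finsetSum fun k _ => (summable_mul_divDiffPow hx hα k).mul_right _]
  simp_rw [tsum_mul_right]

theorem summable_abs_pow_div_factorial_mul_pow (c s : ℝ) :
    Summable fun p : ℕ => |c ^ p / p.factorial| * s ^ p := by
  simpa [abs_div, abs_pow, div_mul_eq_mul_div, ← mul_pow] using
    Real.summable_pow_div_factorial (|c| * s)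

/-- The divided difference `[x 0, …, x k]` of `t ↦ exp (c * t)`. -/
noncomputable def expDivDiff (x : ℕ → ℝ) (c : ℝ) (k : ℕ) : ℝ :=
  ∑' p, c ^ p / p.factorial * divDiffPow x k p

theorem exp_mul_eq_sum_expDivDiff {x : ℕ → ℝ} {r : ℝ} (hx : ∀ l, |x l| ≤ r) (c : ℝ)
    {n i : ℕ} (hi : i < n) :
    Real.exp (x i * c) = ∑ k ∈ range n, expDivDiff x c k * ∏ l ∈ range k, (x i - x l) := by
  simp only [expDivDiff]
  rw [← tsum_mul_pow_eq_sum hx (summable_abs_pow_div_factorial_mul_pow c _) hi,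
    Real.exp_eq_exp_ℝ, NormedSpace.exp_eq_tsum_div]
  exact tsum_congr fun p => by ring

/-- The divided difference `[x 0, …, x k] ⊗ [y 0, …, y l]` of `(s, t) ↦ exp (c * s * t)`. -/
noncomputable def expDivDiff₂ (x y : ℕ → ℝ) (c : ℝ) (k l : ℕ) : ℝ :=
  ∑' p, c ^ p / p.factorial * divDiffPow x k p * divDiffPow y l p

theorem expDivDiff_mul_eq_sum {x y : ℕ → ℝ} {r s : ℝ} (hx : ∀ l, |x l| ≤ r)
    (hy : ∀ l, |y l| ≤ s) (c : ℝ) (k : ℕ) {n j : ℕ} (hj : j < n) :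
    expDivDiff x (c * y j) k
      = ∑ l ∈ range n, expDivDiff₂ x y c k l * ∏ m ∈ range l, (y j - y m) := by
  have hα : Summable fun p => |c ^ p / p.factorial * divDiffPow x k p| * (s + 1) ^ p := by
    have hr : 0 ≤ r + 1 := by linarith [(abs_nonneg _).trans (hx 0)]
    have hs : 0 ≤ s + 1 := by linarith [(abs_nonneg _).trans (hy 0)]
    refine (summable_abs_pow_div_factorial_mul_pow c ((r + 1) * (s + 1))).of_nonneg_of_le
      (fun p => by positivity) fun p => ?_
    rw [abs_mul, mul_pow, ← mul_assoc]
    gcongr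
    exact abs_divDiffPow_le hx k p
  simp only [expDivDiff, expDivDiff₂]
  rw [← tsum_mul_pow_eq_sum hy hα hj]
  exact tsum_congr fun p => by ring

section PadZero

variable {M : Type*} [Zero M] {n : ℕ}

def padZero (x : Fin n → M) (l : ℕ) : M := if h : l < n then x ⟨l, h⟩ else 0

@[simp] theorem padZero_val (x : Fin n → M) (i : Fin n) : padZero x i = x i := by
  simp [padZero]

@[simp] theorem padZero_zero : padZero (0 : Fin n → M) = 0 := by
  ext l; simp [padZero]

theorem continuous_padZero [TopologicalSpace M] : Continuous (padZero : (Fin n → M) → ℕ → M) :=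
  continuous_pi fun l => by
    unfold padZero
    split
    · exact continuous_apply _
    · exact continuous_const

theorem injective_padZero_val {x : Fin n → M} (hx : Function.Injective x) :
    Function.Injective fun i : Fin n => padZero x i := by
  simpa using hx

end PadZero

theorem abs_padZero_le {n : ℕ} (x : Fin n → ℝ) (l : ℕ) : |padZero x l| ≤ ‖x‖ := by
  unfold padZero
  split
  · exact norm_le_pi_norm x _
  · simp

section NewtonMatrix

variable {R : Type*} [CommRing R]

def newtonMatrix (n : ℕ) (x : ℕ → R) : Matrix (Fin n) (Fin n) R :=
  of fun i k => ∏ l ∈ range k, (x i - x l)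

theorem det_newtonMatrix (n : ℕ) (x : ℕ → R) :
    (newtonMatrix n x).det = ∏ i : Fin n, ∏ l ∈ range i, (x i - x l) :=
  det_of_isLowerTriangular _ fun _ _ hik =>
    prod_eq_zero (mem_range.2 (Fin.lt_def.1 hik)) (sub_self _)

theorem det_newtonMatrix_ne_zero [IsDomain R] {n : ℕ} {x : ℕ → R}
    (hx : Function.Injective fun i : Fin n => x i) : (newtonMatrix n x).det ≠ 0 := by
  rw [det_newtonMatrix]
  refine prod_ne_zero_iff.2 fun i _ => prod_ne_zero_iff.2 fun l hl => sub_ne_zero.2 fun h => ?_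
  have hli : l < i := mem_range.1 hl
  have := @hx i ⟨l, hli.trans i.2⟩ h
  simp [Fin.ext_iff] at this
  omega

end NewtonMatrix

theorem det_exp_mul_eq {n : ℕ} (x c : Fin n → ℝ) :
    (of fun i j => Real.exp (x i * c j)).det
      = (newtonMatrix n (padZero x)).det
        * (of fun k j : Fin n => expDivDiff (padZero x) (c j) k).det := by
  rw [← det_mul]
  congr 1
  ext i j
  rw [of_apply, ← padZero_val x i, exp_mul_eq_sum_expDivDiff (abs_padZero_le x) (c j) i.2,
    mul_apply, ← Fin.sum_univ_eq_sum_range]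
  exact sum_congr rfl fun k _ => mul_comm _ _

theorem det_expDivDiff_mul_eq {n : ℕ} (x y : Fin n → ℝ) (c : ℝ) :
    (of fun k j : Fin n => expDivDiff (padZero x) (c * y j) k).det
      = (of fun k l : Fin n => expDivDiff₂ (padZero x) (padZero y) c k l).det
        * (newtonMatrix n (padZero y)).det := by
  rw [← det_transpose (newtonMatrix n (padZero y)), ← det_mul]
  congr 1
  ext k j
  rw [of_apply, ← padZero_val y j,
    expDivDiff_mul_eq_sum (abs_padZero_le x) (abs_padZero_le y) c k j.2, mul_apply,
    ← Fin.sum_univ_eq_sum_range]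
  rfl

theorem tendsto_divDiffPow_padZero (n k p : ℕ) :
    Tendsto (fun x : Fin n → ℝ => divDiffPow (padZero x) k p) (𝓝 0)
      (𝓝 (if k = p then 1 else 0)) := by
  simpa [Function.comp_def, divDiffPow_zero] using
    ((continuous_divDiffPow k p).comp continuous_padZero).tendsto (0 : Fin n → ℝ)

theorem eventually_abs_divDiffPow_padZero_le (n : ℕ) :
    ∀ᶠ x : Fin n → ℝ in 𝓝 0, ∀ k p, |divDiffPow (padZero x) k p| ≤ 2 ^ p := by
  filter_upwards [tendsto_norm_zero.eventually (eventually_le_nhds one_pos)] with x hx k p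
  simpa [one_add_one_eq_two] using abs_divDiffPow_le (fun l => (abs_padZero_le x l).trans hx) k p

theorem tendsto_expDivDiff (n k : ℕ) (c : ℝ) :
    Tendsto (fun x : Fin n → ℝ => expDivDiff (padZero x) c k) (𝓝 0)
      (𝓝 (c ^ k / k.factorial)) := by
  have h := tendsto_tsum_of_dominated_convergence
    (summable_abs_pow_div_factorial_mul_pow c 2)
    (fun p => tendsto_const_nhds.mul (tendsto_divDiffPow_padZero n k p))
    (by
      filter_upwards [eventually_abs_divDiffPow_padZero_le n] with x hx p
      rw [Real.norm_eq_abs, abs_mul]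
      gcongr
      exact hx k p)
  rwa [tsum_eq_single k fun p hp => by simp [Ne.symm hp], if_pos rfl, mul_one] at h

theorem tendsto_expDivDiff₂ (n k l : ℕ) (c : ℝ) :
    Tendsto (fun q : (Fin n → ℝ) × (Fin n → ℝ) => expDivDiff₂ (padZero q.1) (padZero q.2) c k l)
      (𝓝 (0, 0)) (𝓝 (if k = l then c ^ k / k.factorial else 0)) := by
  have hfst : Tendsto Prod.fst (𝓝 ((0, 0) : (Fin n → ℝ) × (Fin n → ℝ))) (𝓝 0) :=
    continuous_fst.tendsto _
  have hsnd : Tendsto Prod.snd (𝓝 ((0, 0) : (Fin n → ℝ) × (Fin n → ℝ))) (𝓝 0) :=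
    continuous_snd.tendsto _
  have h := tendsto_tsum_of_dominated_convergence
    (summable_abs_pow_div_factorial_mul_pow c 4)
    (fun p => (tendsto_const_nhds.mul ((tendsto_divDiffPow_padZero n k p).comp hfst)).mul
      ((tendsto_divDiffPow_padZero n l p).comp hsnd))
    (by
      filter_upwards [hfst.eventually (eventually_abs_divDiffPow_padZero_le n),
        hsnd.eventually (eventually_abs_divDiffPow_padZero_le n)] with q hqx hqy p
      simp only [Function.comp_apply]
      rw [Real.norm_eq_abs, abs_mul, abs_mul, show (4 : ℝ) ^ p = 2 ^ p * 2 ^ p by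
        rw [← mul_pow]; norm_num, ← mul_assoc]
      gcongr
      · exact hqx k p
      · exact hqy l p)
  rw [tsum_eq_single k fun p hp => by simp [Ne.symm hp]] at h
  by_cases hkl : k = l
  · simpa [expDivDiff₂, hkl] using h
  · simpa [expDivDiff₂, hkl, Ne.symm hkl] using h

theorem det_pow_div_factorial {n : ℕ} (c : Fin n → ℝ) :
    (of fun k j : Fin n => c j ^ (k : ℕ) / ((k : ℕ).factorial : ℝ)).det
      = (∏ k : Fin n, ((k : ℕ).factorial : ℝ)⁻¹) * ∏ i, ∏ j ∈ Ioi i, (c j - c i) := by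
  rw [← det_vandermonde, ← det_transpose (vandermonde c), ← det_mul_column]
  congr 1
  ext k j
  simp [div_eq_inv_mul]

theorem tendsto_det_expDivDiff {n : ℕ} (c : Fin n → ℝ) :
    Tendsto (fun x : Fin n → ℝ => (of fun k j : Fin n => expDivDiff (padZero x) (c j) k).det)
      (𝓝 0) (𝓝 ((∏ k : Fin n, ((k : ℕ).factorial : ℝ)⁻¹) * ∏ i, ∏ j ∈ Ioi i, (c j - c i))) := by
  rw [← det_pow_div_factorial]
  exact (continuous_id.matrix_det.tendsto _).comp
    (tendsto_pi_nhds.2 fun k => tendsto_pi_nhds.2 fun j => tendsto_expDivDiff n k (c j))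

theorem tendsto_det_expDivDiff₂ (n : ℕ) (c : ℝ) :
    Tendsto (fun q : (Fin n → ℝ) × (Fin n → ℝ) =>
        (of fun k l : Fin n => expDivDiff₂ (padZero q.1) (padZero q.2) c k l).det)
      (𝓝 (0, 0)) (𝓝 (∏ k : Fin n, c ^ (k : ℕ) / ((k : ℕ).factorial : ℝ))) := by
  rw [← det_diagonal]
  refine (continuous_id.matrix_det.tendsto _).comp
    (tendsto_pi_nhds.2 fun k => tendsto_pi_nhds.2 fun l => ?_)
  simpa [diagonal_apply, Fin.val_inj] using tendsto_expDivDiff₂ n k l c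

theorem heatK_eq (t a b : ℝ) :
    heatK t a b = (Real.sqrt (2 * Real.pi * t))⁻¹ * Real.exp (-a ^ 2 / (2 * t))
      * Real.exp (-b ^ 2 / (2 * t)) * Real.exp (a * (t⁻¹ * b)) := by
  simp only [heatK, mul_assoc, ← Real.exp_add]
  congr 2
  ring

theorem heatK_comm (t a b : ℝ) : heatK t a b = heatK t b a := by
  rw [heatK, heatK, sub_sq_comm]

noncomputable def gaussProd {ι : Type*} [Fintype ι] (t : ℝ) (x : ι → ℝ) : ℝ :=
  ∏ i, Real.exp (-x i ^ 2 / (2 * t))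

theorem tendsto_gaussProd (n : ℕ) (t : ℝ) :
    Tendsto (gaussProd (ι := Fin n) t) (𝓝 0) (𝓝 1) := by
  have : Continuous (gaussProd (ι := Fin n) t) := by unfold gaussProd; fun_prop
  simpa [gaussProd] using this.tendsto 0

theorem det_heatK (t : ℝ) {n : ℕ} (x c : Fin n → ℝ) :
    (of fun i j => heatK t (x i) (c j)).det
      = (Real.sqrt (2 * Real.pi * t))⁻¹ ^ n * gaussProd t x * gaussProd t c
        * (of fun i j => Real.exp (x i * (t⁻¹ * c j))).det := by
  set E : Matrix (Fin n) (Fin n) ℝ := of fun i j => Real.exp (x i * (t⁻¹ * c j))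
  have : (of fun i j => heatK t (x i) (c j)) = of fun i j =>
      ((Real.sqrt (2 * Real.pi * t))⁻¹ * Real.exp (-x i ^ 2 / (2 * t)))
        * (of fun i j => Real.exp (-c j ^ 2 / (2 * t)) * E i j) i j := by
    ext i j
    simp only [of_apply, E, heatK_eq, mul_assoc]
  rw [this, det_mul_column, det_mul_row, prod_mul_distrib, prod_const, card_univ,
    Fintype.card_fin, gaussProd, gaussProd]
  ring

theorem prod_factorial_Icc_one (n : ℕ) :
    ∏ j ∈ Icc 1 (n - 1), (j.factorial : ℝ) = ∏ k : Fin n, ((k : ℕ).factorial : ℝ) := by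
  rw [Fin.prod_univ_eq_prod_range (fun k => (k.factorial : ℝ))]
  cases n with
  | zero => simp
  | succ n =>
    rw [prod_range_succ', ← Ico_add_one_right_eq_Icc, prod_Ico_eq_prod_range]
    simp [add_comm 1]

theorem prod_inv_two_pow (n : ℕ) :
    ∏ k : Fin n, (2 : ℝ)⁻¹ ^ (k : ℕ) = ((2 : ℝ) ^ (n * (n - 1) / 2))⁻¹ := by
  rw [prod_pow_eq_pow_sum, Fin.sum_univ_eq_sum_range (fun k => k), sum_range_id, inv_pow]

theorem sqrt_two_pi_pow_div_sqrt_four_pi_pow (n : ℕ) :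
    (Real.sqrt (2 * Real.pi))⁻¹ ^ (2 * n) / (Real.sqrt (4 * Real.pi))⁻¹ ^ n
      = (Real.pi ^ ((n : ℝ) / 2))⁻¹ := by
  have hπ := Real.pi_pos
  have h4 : Real.sqrt (4 * Real.pi) = 2 * Real.sqrt Real.pi := by
    rw [Real.sqrt_mul' _ hπ.le, show (4 : ℝ) = 2 ^ 2 by norm_num, Real.sqrt_sq zero_le_two]
  rw [pow_mul, inv_pow, Real.sq_sqrt (by positivity), h4, Real.rpow_div_two_eq_sqrt _ hπ.le,
    Real.rpow_natCast]
  nth_rw 1 [← Real.sq_sqrt hπ.le]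
  have hsqrt := Real.sqrt_pos.2 hπ
  simp only [inv_pow, mul_pow, ← pow_mul]
  field_simp
  ring

/-- The ratio of the theorem with the factor `det N(x) * det N(y)`, which vanishes on the diagonal,
cancelled from numerator and denominator. -/
noncomputable def reducedBridgeRatio {n : ℕ} (b : Fin n → ℝ) (q : (Fin n → ℝ) × (Fin n → ℝ)) :
    ℝ :=
  (Real.sqrt (2 * Real.pi))⁻¹ ^ (2 * n) * gaussProd 1 b ^ 2
      * (gaussProd 1 q.1 * gaussProd 1 q.2
        * (of fun k j : Fin n => expDivDiff (padZero q.1) (b j) k).det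
        * (of fun k j : Fin n => expDivDiff (padZero q.2) (b j) k).det)
    / ((Real.sqrt (4 * Real.pi))⁻¹ ^ n
      * (gaussProd 2 q.1 * gaussProd 2 q.2
        * (of fun k l : Fin n => expDivDiff₂ (padZero q.1) (padZero q.2) 2⁻¹ k l).det))

theorem det_heatK_one {n : ℕ} (x b : Fin n → ℝ) :
    (of fun i j => heatK 1 (x i) (b j)).det
      = (Real.sqrt (2 * Real.pi))⁻¹ ^ n * gaussProd 1 x * gaussProd 1 b
        * ((newtonMatrix n (padZero x)).det
          * (of fun k j : Fin n => expDivDiff (padZero x) (b j) k).det) := by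
  rw [det_heatK, det_exp_mul_eq]
  simp only [mul_one, inv_one, one_mul]

theorem det_heatK_two {n : ℕ} (x y : Fin n → ℝ) :
    (of fun i j => heatK 2 (x i) (y j)).det
      = (Real.sqrt (4 * Real.pi))⁻¹ ^ n * gaussProd 2 x * gaussProd 2 y
        * ((newtonMatrix n (padZero x)).det
          * ((of fun k l : Fin n => expDivDiff₂ (padZero x) (padZero y) 2⁻¹ k l).det
            * (newtonMatrix n (padZero y)).det)) := by
  rw [det_heatK, det_exp_mul_eq, det_expDivDiff_mul_eq,
    show 2 * Real.pi * 2 = 4 * Real.pi by ring]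

theorem heatK_det_ratio_eq {n : ℕ} (b x y : Fin n → ℝ) (hx : Function.Injective x)
    (hy : Function.Injective y) :
    (of fun i j => heatK 1 (x i) (b j)).det * (of fun i j => heatK 1 (b i) (y j)).det
        / (of fun i j => heatK 2 (x i) (y j)).det
      = reducedBridgeRatio b (x, y) := by
  have hsymm : (of fun i j => heatK 1 (b i) (y j)) = (of fun i j => heatK 1 (y i) (b j))ᵀ := by
    ext i j
    exact heatK_comm 1 (b i) (y j)
  have hN := mul_ne_zero (det_newtonMatrix_ne_zero (injective_padZero_val hx))
    (det_newtonMatrix_ne_zero (injective_padZero_val hy))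
  rw [hsymm, det_transpose, det_heatK_one, det_heatK_one, det_heatK_two, reducedBridgeRatio,
    eq_comm, ← mul_div_mul_left _ _ hN]
  congr 1 <;> ring

theorem bridge_limit_eq_gue_density {n : ℕ} (b : Fin n → ℝ) :
    (Real.sqrt (2 * Real.pi))⁻¹ ^ (2 * n) * gaussProd 1 b ^ 2
        * (((∏ k : Fin n, ((k : ℕ).factorial : ℝ)⁻¹) * ∏ i, ∏ j ∈ Ioi i, (b j - b i))
          * ((∏ k : Fin n, ((k : ℕ).factorial : ℝ)⁻¹) * ∏ i, ∏ j ∈ Ioi i, (b j - b i)))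
      / ((Real.sqrt (4 * Real.pi))⁻¹ ^ n
        * ∏ k : Fin n, (2 : ℝ)⁻¹ ^ (k : ℕ) / ((k : ℕ).factorial : ℝ))
      = 2 ^ (n * (n - 1) / 2) /
            (Real.pi ^ ((n : ℝ) / 2) * ∏ j ∈ Finset.Icc 1 (n - 1), (Nat.factorial j : ℝ)) *
          (∏ i : Fin n, ∏ j ∈ Finset.Ioi i, (b i - b j) ^ 2) *
          ∏ j : Fin n, Real.exp (-(b j) ^ 2) := by
  have hgauss : gaussProd 1 b ^ 2 = ∏ j, Real.exp (-b j ^ 2) := by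
    rw [gaussProd, ← prod_pow]
    exact prod_congr rfl fun j _ => by rw [← Real.exp_nat_mul]; ring_nf
  have hvdm :
      (∏ i, ∏ j ∈ Ioi i, (b j - b i)) ^ 2 = ∏ i : Fin n, ∏ j ∈ Ioi i, (b i - b j) ^ 2 := by
    simp only [← prod_pow, sub_sq_comm]
  have hπ := sqrt_two_pi_pow_div_sqrt_four_pi_pow n
  have hF : 0 < ∏ k : Fin n, ((k : ℕ).factorial : ℝ) := prod_pos fun k _ => by positivity
  rw [prod_div_distrib, prod_inv_two_pow, prod_factorial_Icc_one, prod_inv_distrib, ← hgauss,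
    ← hvdm]
  rw [div_eq_iff (by positivity)] at hπ
  rw [hπ]
  field_simp

theorem tendsto_reducedBridgeRatio {n : ℕ} (b : Fin n → ℝ) :
    Tendsto (reducedBridgeRatio b) (𝓝 (0, 0))
      (𝓝 (2 ^ (n * (n - 1) / 2) /
            (Real.pi ^ ((n : ℝ) / 2) * ∏ j ∈ Finset.Icc 1 (n - 1), (Nat.factorial j : ℝ)) *
          (∏ i : Fin n, ∏ j ∈ Finset.Ioi i, (b i - b j) ^ 2) *
          ∏ j : Fin n, Real.exp (-(b j) ^ 2))) := by
  have hfst : Tendsto Prod.fst (𝓝 ((0, 0) : (Fin n → ℝ) × (Fin n → ℝ))) (𝓝 0) :=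
    continuous_fst.tendsto _
  have hsnd : Tendsto Prod.snd (𝓝 ((0, 0) : (Fin n → ℝ) × (Fin n → ℝ))) (𝓝 0) :=
    continuous_snd.tendsto _
  have hW : 0 < ∏ k : Fin n, (2 : ℝ)⁻¹ ^ (k : ℕ) / ((k : ℕ).factorial : ℝ) :=
    prod_pos fun k _ => by positivity
  have hπ := Real.pi_pos
  rw [← bridge_limit_eq_gue_density]
  simpa only [one_mul] using show Tendsto (reducedBridgeRatio b) _ _ from
    (tendsto_const_nhds.mul (((((tendsto_gaussProd n 1).comp hfst).mul
      ((tendsto_gaussProd n 1).comp hsnd)).mul ((tendsto_det_expDivDiff b).comp hfst)).mul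
      ((tendsto_det_expDivDiff b).comp hsnd))).div
    (tendsto_const_nhds.mul ((((tendsto_gaussProd n 2).comp hfst).mul
      ((tendsto_gaussProd n 2).comp hsnd)).mul (tendsto_det_expDivDiff₂ n 2⁻¹)))
    (by positivity)

theorem nonintersecting_bridge_density_limit_general (n : ℕ)
    (b : Fin n → ℝ) :
    Tendsto
      (fun q : (Fin n → ℝ) × (Fin n → ℝ) =>
        Matrix.det (Matrix.of fun i j : Fin n => heatK 1 (q.1 i) (b j)) *
          Matrix.det (Matrix.of fun i j : Fin n => heatK 1 (b i) (q.2 j)) /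
          Matrix.det (Matrix.of fun i j : Fin n => heatK 2 (q.1 i) (q.2 j)))
      (nhdsWithin (0, 0) {q : (Fin n → ℝ) × (Fin n → ℝ) | StrictAnti q.1 ∧ StrictAnti q.2})
      (nhds
        ((2 ^ (n * (n - 1) / 2) /
            (Real.pi ^ ((n : ℝ) / 2) * ∏ j ∈ Finset.Icc 1 (n - 1), (Nat.factorial j : ℝ))) *
          (∏ i : Fin n, ∏ j ∈ Finset.Ioi i, (b i - b j) ^ 2) *
          ∏ j : Fin n, Real.exp (-(b j) ^ 2))) := by
  refine ((tendsto_reducedBridgeRatio b).mono_left nhdsWithin_le_nhds).congr' ?_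
  filter_upwards [self_mem_nhdsWithin] with q hq
  exact (heatK_det_ratio_eq b q.1 q.2 hq.1.injective hq.2.injective).symm

theorem nonintersecting_bridge_density_limit (n : ℕ) (hn : 1 ≤ n)
    (b : Fin n → ℝ) (hb : StrictAnti b) :
    Tendsto
      (fun q : (Fin n → ℝ) × (Fin n → ℝ) =>
        Matrix.det (Matrix.of fun i j : Fin n => heatK 1 (q.1 i) (b j)) *
          Matrix.det (Matrix.of fun i j : Fin n => heatK 1 (b i) (q.2 j)) /
          Matrix.det (Matrix.of fun i j : Fin n => heatK 2 (q.1 i) (q.2 j)))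
      (nhdsWithin (0, 0) {q : (Fin n → ℝ) × (Fin n → ℝ) | StrictAnti q.1 ∧ StrictAnti q.2})
      (nhds
        ((2 ^ (n * (n - 1) / 2) /
            (Real.pi ^ ((n : ℝ) / 2) * ∏ j ∈ Finset.Icc 1 (n - 1), (Nat.factorial j : ℝ))) *
          (∏ i : Fin n, ∏ j ∈ Finset.Ioi i, (b i - b j) ^ 2) *
          ∏ j : Fin n, Real.exp (-(b j) ^ 2))) :=
  nonintersecting_bridge_density_limit_general n b
end
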